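/- arXiv:1801.03865 — 7 statements merged into one kernel-verified Lean document; each statement's English description precedes it below -/
import Mathlib

section
/- For every optimal rate–payment pair (r̃,p̃), the minimum utility is bounded above as min_{i∈N} u_i(r̃,p̃) ≤ k − max( max_{i∈N} |X_i| , (∑_{i∈N} |X_i| + r*_N)/n ), where r*_N = min{r_N : r ∈ 𝓡_N}. -/
/- Setting: `n` users, `k` packets. `X i` is the initial packet set of user `i`,
`Xbar X i` its complement. Coalitions, rate vectors in `𝓡_S`, payment matrices in `𝒫_S`,
utilities, rationality, feasibility (stability of the grand coalition) and optimality,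
as in "A Monetary Mechanism for Stabilizing Cooperative Data Exchange with Selfish Users". -/

noncomputable section

/-- `S` is a coalition: the users in `S` collectively know all packets. -/
def isCoalition {n k : ℕ} (X : Fin n → Finset (Fin k)) (S : Finset (Fin n)) : Prop :=
  ∀ x : Fin k, ∃ i ∈ S, x ∈ X i

/-- The set `X̄_i` of packets wanted by user `i`. -/
def Xbar {n k : ℕ} (X : Fin n → Finset (Fin k)) (i : Fin n) : Finset (Fin k) :=
  (X i)ᶜ

/-- `|⋂_{j ∈ T} X̄_j|`. -/
def cutCard {n k : ℕ} (X : Fin n → Finset (Fin k)) (T : Finset (Fin n)) : ℕ :=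
  (Finset.univ.filter fun x : Fin k => ∀ j ∈ T, x ∈ Xbar X j).card

/-- The sum-rate `r_S`. -/
def rSum {n : ℕ} (S : Finset (Fin n)) (r : Fin n → ℕ) : ℕ := ∑ i ∈ S, r i

/-- `r ∈ 𝓡_S`: `r i = 0` off `S`, and the cut-set conditions
`∑_{i ∈ S̃} r_i ≥ |⋂_{j ∈ S∖S̃} X̄_j|` for all nonempty `S̃ ⊊ S`. -/
def rateOK {n k : ℕ} (X : Fin n → Finset (Fin k)) (S : Finset (Fin n)) (r : Fin n → ℕ) : Prop :=
  (∀ i ∉ S, r i = 0) ∧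
  ∀ T : Finset (Fin n), T.Nonempty → T ⊂ S → cutCard X (S \ T) ≤ rSum T r

/-- `p` is a payment matrix: nonnegative entries and zero diagonal. -/
def isPayMatrix {n : ℕ} (p : Fin n → Fin n → ℝ) : Prop :=
  (∀ i j, 0 ≤ p i j) ∧ ∀ i, p i i = 0

/-- `p ∈ 𝒫_S`: no payments between `S` and its complement. -/
def payOK {n : ℕ} (S : Finset (Fin n)) (p : Fin n → Fin n → ℝ) : Prop :=
  ∀ i ∈ S, ∀ j ∉ S, p i j = 0 ∧ p j i = 0

/-- Total incoming payment `p⁺_i = ∑_{j ≠ i} p_{j,i}`. -/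
def pPlus {n : ℕ} (p : Fin n → Fin n → ℝ) (i : Fin n) : ℝ := ∑ j ∈ Finset.univ.erase i, p j i

/-- Total outgoing payment `p⁻_i = ∑_{j ≠ i} p_{i,j}`. -/
def pMinus {n : ℕ} (p : Fin n → Fin n → ℝ) (i : Fin n) : ℝ := ∑ j ∈ Finset.univ.erase i, p i j

/-- The sum-payment `p_S = ∑_{i,j ∈ S} p_{i,j}`. -/
def pSum {n : ℕ} (S : Finset (Fin n)) (p : Fin n → Fin n → ℝ) : ℝ := ∑ i ∈ S, ∑ j ∈ S, p i j

/-- Utility `u_i(r,p) = (p⁺_i − r_i) + (|X̄_i| − p⁻_i)`. -/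
def util {n k : ℕ} (X : Fin n → Finset (Fin k)) (r : Fin n → ℕ) (p : Fin n → Fin n → ℝ)
    (i : Fin n) : ℝ :=
  (pPlus p i - (r i : ℝ)) + (((Xbar X i).card : ℝ) - pMinus p i)

/-- Rationality: `p⁺_i ≥ r_i` and `p⁻_i ≤ |X̄_i|` for all `i ∈ S`. -/
def rational {n k : ℕ} (X : Fin n → Finset (Fin k)) (S : Finset (Fin n)) (r : Fin n → ℕ)
    (p : Fin n → Fin n → ℝ) : Prop :=
  ∀ i ∈ S, (r i : ℝ) ≤ pPlus p i ∧ pMinus p i ≤ ((Xbar X i).card : ℝ)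

/-- Feasibility: `(r,p)` is a rational pair with `r ∈ 𝓡_N`, `p ∈ 𝒫_N`, and no minor coalition
`S` has a rational pair `(r',p')` with `r' ∈ 𝓡_S`, `p' ∈ 𝒫_S` that Pareto-dominates
`(r,p)` for the users of `S`. -/
def feasible {n k : ℕ} (X : Fin n → Finset (Fin k)) (r : Fin n → ℕ)
    (p : Fin n → Fin n → ℝ) : Prop :=
  rateOK X Finset.univ r ∧ isPayMatrix p ∧ payOK Finset.univ p ∧
  rational X Finset.univ r p ∧
  ¬ ∃ (S : Finset (Fin n)) (r' : Fin n → ℕ) (p' : Fin n → Fin n → ℝ),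
      S ⊂ Finset.univ ∧ isCoalition X S ∧ rateOK X S r' ∧ isPayMatrix p' ∧ payOK S p' ∧
      rational X S r' p' ∧
      (∀ i ∈ S, util X r p i ≤ util X r' p' i) ∧
      ∃ i ∈ S, util X r p i < util X r' p' i

/-- Optimality: feasible, and no feasible pair has strictly smaller sum-rate or
strictly smaller sum-payment. -/
def optimal {n k : ℕ} (X : Fin n → Finset (Fin k)) (r : Fin n → ℕ)
    (p : Fin n → Fin n → ℝ) : Prop :=
  feasible X r p ∧
  ¬ ∃ (r' : Fin n → ℕ) (p' : Fin n → Fin n → ℝ),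
      feasible X r' p' ∧
      (rSum Finset.univ r' < rSum Finset.univ r ∨ pSum Finset.univ p' < pSum Finset.univ p)

end

section CDEAux
open Finset
variable {n k : ℕ}

lemma cutCard_anti (X : Fin n → Finset (Fin k)) {W W' : Finset (Fin n)} (h : W ⊆ W') :
    cutCard X W' ≤ cutCard X W := by
  classical
  apply Finset.card_le_card
  intro x hx
  simp only [cutCard, Finset.mem_filter] at hx ⊢
  exact ⟨hx.1, fun j hj => hx.2 j (h hj)⟩

lemma cutCard_singleton (X : Fin n → Finset (Fin k)) (a : Fin n) :
    cutCard X {a} = (Xbar X a).card := by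
  classical
  unfold cutCard
  congr 1
  ext x
  simp [Xbar]

lemma cutCard_coalition (X : Fin n → Finset (Fin k)) {B : Finset (Fin n)}
    (hB : isCoalition X B) : cutCard X B = 0 := by
  classical
  unfold cutCard
  rw [Finset.card_eq_zero]
  ext x
  simp only [cutCard, Finset.mem_filter, Finset.notMem_empty, iff_false, not_and]
  intro _
  obtain ⟨i, hiB, hxi⟩ := hB x
  intro hall
  have := hall i hiB
  simp [Xbar] at this
  exact this hxi

/-- the set of achievable sum-rates of a coalition -/
def rhoSet (X : Fin n → Finset (Fin k)) (S : Finset (Fin n)) : Set ℕ :=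
  {m | ∃ r : Fin n → ℕ, rateOK X S r ∧ rSum S r = m}

lemma rhoSet_nonempty (X : Fin n → Finset (Fin k)) (S : Finset (Fin n)) :
    (rhoSet X S).Nonempty := by
  classical
  refine ⟨_, fun i => if i ∈ S then k else 0, ⟨fun i hi => if_neg hi, ?_⟩, rfl⟩
  intro T hTne hTS
  obtain ⟨t, ht⟩ := hTne
  have htS : t ∈ S := hTS.subset ht
  calc cutCard X (S \ T) ≤ (Finset.univ : Finset (Fin k)).card := Finset.card_filter_le _ _
    _ = k := by simp
    _ = (fun i => if i ∈ S then k else 0) t := by simp [htS]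
    _ ≤ rSum T (fun i => if i ∈ S then k else 0) := by
        unfold rSum
        exact Finset.single_le_sum (f := fun i => if i ∈ S then k else 0)
          (fun i _ => Nat.zero_le _) ht

/-- minimum sum-rate of a coalition -/
noncomputable def rho (X : Fin n → Finset (Fin k)) (S : Finset (Fin n)) : ℕ := sInf (rhoSet X S)

lemma rho_spec (X : Fin n → Finset (Fin k)) (S : Finset (Fin n)) :
    ∃ r : Fin n → ℕ, rateOK X S r ∧ rSum S r = rho X S :=
  Nat.sInf_mem (rhoSet_nonempty X S)

lemma rho_le (X : Fin n → Finset (Fin k)) {S : Finset (Fin n)} {r : Fin n → ℕ}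
    (h : rateOK X S r) : rho X S ≤ rSum S r :=
  Nat.sInf_le ⟨r, h, rfl⟩

lemma rSum_eq_inter {S T : Finset (Fin n)} {r : Fin n → ℕ} (hz : ∀ i ∉ S, r i = 0) :
    rSum T r = rSum (T ∩ S) r := by
  classical
  refine (Finset.sum_subset Finset.inter_subset_left ?_).symm
  intro i hiT hiTS
  exact hz i (fun hiS => hiTS (Finset.mem_inter.2 ⟨hiT, hiS⟩))

lemma rSum_mono {S T : Finset (Fin n)} {r : Fin n → ℕ} (h : S ⊆ T) :
    rSum S r ≤ rSum T r :=
  Finset.sum_le_sum_of_subset h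

lemma isCoalition_mono (X : Fin n → Finset (Fin k)) {S S' : Finset (Fin n)} (h : S ⊆ S')
    (hS : isCoalition X S) : isCoalition X S' := by
  intro x
  obtain ⟨i, hi, hxi⟩ := hS x
  exact ⟨i, h hi, hxi⟩

lemma card_xbar_le_rho (X : Fin n → Finset (Fin k)) {A : Finset (Fin n)} {a : Fin n}
    (ha : a ∈ A) (hA : isCoalition X A) : (Xbar X a).card ≤ rho X A := by
  classical
  obtain ⟨r, hOK, hsum⟩ := rho_spec X A
  by_cases hne : (A.erase a).Nonempty
  · have hsub : A.erase a ⊂ A := Finset.erase_ssubset ha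
    have hcut := hOK.2 (A.erase a) hne hsub
    have hset : A \ A.erase a = {a} := by
      ext x
      simp only [Finset.mem_sdiff, Finset.mem_erase, Finset.mem_singleton]
      constructor
      · rintro ⟨hxA, hx⟩
        by_contra hxa
        exact hx ⟨hxa, hxA⟩
      · rintro rfl
        exact ⟨ha, fun h => h.1 rfl⟩
    rw [hset, cutCard_singleton] at hcut
    calc (Xbar X a).card ≤ rSum (A.erase a) r := hcut
      _ ≤ rSum A r := rSum_mono (Finset.erase_subset _ _)
      _ = rho X A := hsum
  · have hAa : A = {a} := by
      rw [Finset.not_nonempty_iff_eq_empty] at hne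
      apply Finset.eq_singleton_iff_unique_mem.2
      refine ⟨ha, fun x hx => ?_⟩
      by_contra hxa
      exact (Finset.notMem_empty x) (hne ▸ Finset.mem_erase.2 ⟨hxa, hx⟩)
    have : Xbar X a = ∅ := by
      ext x
      simp only [Finset.notMem_empty, iff_false, Xbar, Finset.mem_compl]
      obtain ⟨i, hi, hxi⟩ := hA x
      rw [hAa, Finset.mem_singleton] at hi
      subst hi
      exact fun h => h hxi
    simp [this]

end CDEAux
section CDEAux2
open Finset
variable {n k : ℕ}

lemma rho_union_le_right (X : Fin n → Finset (Fin k)) {A B : Finset (Fin n)}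
    (hA : isCoalition X A) (hB : isCoalition X B) (hle : rho X A ≤ rho X B) :
    rho X (A ∪ B) ≤ rho X B := by
  classical
  obtain ⟨b, hOK, hsum⟩ := rho_spec X B
  have hz : ∀ i ∉ B, b i = 0 := hOK.1
  have hOKU : rateOK X (A ∪ B) b := by
    refine ⟨fun i hi => hz i (fun hiB => hi (Finset.mem_union_right _ hiB)), ?_⟩
    intro T hTne hTsub
    have hrT : rSum T b = rSum (T ∩ B) b := rSum_eq_inter hz
    rcases (T ∩ B).eq_empty_or_nonempty with hTB | hTB
    · -- B is inside the complement, cut is 0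
      have hBsub : B ⊆ (A ∪ B) \ T := by
        intro j hj
        refine Finset.mem_sdiff.2 ⟨Finset.mem_union_right _ hj, fun hjT => ?_⟩
        have : j ∈ T ∩ B := Finset.mem_inter.2 ⟨hjT, hj⟩
        rw [hTB] at this
        exact absurd this (Finset.notMem_empty j)
      calc cutCard X ((A ∪ B) \ T) ≤ cutCard X B := cutCard_anti X hBsub
        _ = 0 := cutCard_coalition X hB
        _ ≤ rSum T b := Nat.zero_le _
    · by_cases hBT : B ⊆ T
      · obtain ⟨x, hxU, hxT⟩ := Finset.exists_of_ssubset hTsub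
        have hxA : x ∈ A := by
          rcases Finset.mem_union.1 hxU with h | h
          · exact h
          · exact absurd (hBT h) hxT
        have hxW : ({x} : Finset (Fin n)) ⊆ (A ∪ B) \ T := by
          simp [Finset.singleton_subset_iff, Finset.mem_sdiff, hxU, hxT]
        have h1 : cutCard X ((A ∪ B) \ T) ≤ (Xbar X x).card := by
          calc cutCard X ((A ∪ B) \ T) ≤ cutCard X {x} := cutCard_anti X hxW
            _ = (Xbar X x).card := cutCard_singleton X x
        have h3 : rSum T b = rSum B b := by
          rw [hrT, Finset.inter_eq_right.2 hBT]
        calc cutCard X ((A ∪ B) \ T) ≤ (Xbar X x).card := h1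
          _ ≤ rho X A := card_xbar_le_rho X hxA hA
          _ ≤ rho X B := hle
          _ = rSum B b := hsum.symm
          _ = rSum T b := h3.symm
      · have hTBs : T ∩ B ⊂ B := by
          refine Finset.ssubset_iff_subset_ne.2 ⟨Finset.inter_subset_right, fun h => ?_⟩
          exact hBT (by rw [← h]; exact Finset.inter_subset_left)
        have hcut := hOK.2 (T ∩ B) hTB hTBs
        have hsub2 : B \ (T ∩ B) ⊆ (A ∪ B) \ T := by
          intro j hj
          rw [Finset.mem_sdiff] at hj ⊢
          refine ⟨Finset.mem_union_right _ hj.1, fun hjT => ?_⟩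
          exact hj.2 (Finset.mem_inter.2 ⟨hjT, hj.1⟩)
        calc cutCard X ((A ∪ B) \ T) ≤ cutCard X (B \ (T ∩ B)) := cutCard_anti X hsub2
          _ ≤ rSum (T ∩ B) b := hcut
          _ = rSum T b := hrT.symm
  have : rSum (A ∪ B) b = rSum B b := by
    rw [rSum_eq_inter hz, Finset.union_inter_cancel_right]
  calc rho X (A ∪ B) ≤ rSum (A ∪ B) b := rho_le X hOKU
    _ = rSum B b := this
    _ = rho X B := hsum

lemma rho_union_le_max (X : Fin n → Finset (Fin k)) {A B : Finset (Fin n)}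
    (hA : isCoalition X A) (hB : isCoalition X B) :
    rho X (A ∪ B) ≤ max (rho X A) (rho X B) := by
  rcases le_total (rho X A) (rho X B) with h | h
  · exact le_trans (rho_union_le_right X hA hB h) (le_max_right _ _)
  · rw [Finset.union_comm]
    exact le_trans (rho_union_le_right X hB hA h) (le_max_left _ _)

lemma rho_insert_le (X : Fin n → Finset (Fin k)) {V : Finset (Fin n)} {m : Fin n}
    (hV : isCoalition X V) (hne : V.Nonempty) :
    rho X (insert m V) ≤ rho X V + (Xbar X m).card := by
  classical
  by_cases hm : m ∈ V
  · rw [Finset.insert_eq_self.2 hm]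
    exact Nat.le_add_right _ _
  obtain ⟨rv, hOK, hsum⟩ := rho_spec X V
  obtain ⟨v₀, hv₀⟩ := hne
  set rt := Function.update rv v₀ (rv v₀ + (Xbar X m).card) with hrt
  have hpt : ∀ i, rv i ≤ rt i := by
    intro i
    by_cases hi : i = v₀
    · subst hi; simp [hrt]
    · simp [hrt, Function.update_of_ne hi]
  have hOKt : rateOK X (insert m V) rt := by
    constructor
    · intro i hi
      have hiv : i ≠ v₀ := fun h => hi (h ▸ Finset.mem_insert_of_mem hv₀)
      have hiV : i ∉ V := fun h => hi (Finset.mem_insert_of_mem h)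
      rw [hrt, Function.update_of_ne hiv]
      exact hOK.1 i hiV
    · intro T hTne hTsub
      rcases (T ∩ V).eq_empty_or_nonempty with hTV | hTV
      · -- V inside complement
        have hVsub : V ⊆ insert m V \ T := by
          intro j hj
          refine Finset.mem_sdiff.2 ⟨Finset.mem_insert_of_mem hj, fun hjT => ?_⟩
          have : j ∈ T ∩ V := Finset.mem_inter.2 ⟨hjT, hj⟩
          rw [hTV] at this
          exact absurd this (Finset.notMem_empty j)
        calc cutCard X (insert m V \ T) ≤ cutCard X V := cutCard_anti X hVsub
          _ = 0 := cutCard_coalition X hV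
          _ ≤ rSum T rt := Nat.zero_le _
      · by_cases hVT : V ⊆ T
        · -- complement is {m}
          obtain ⟨x, hxU, hxT⟩ := Finset.exists_of_ssubset hTsub
          have hxm : x = m := by
            rcases Finset.mem_insert.1 hxU with h | h
            · exact h
            · exact absurd (hVT h) hxT
          subst hxm
          have hWsub : insert x V \ T ⊆ {x} := by
            intro j hj
            rw [Finset.mem_sdiff] at hj
            rcases Finset.mem_insert.1 hj.1 with h | h
            · simp [h]
            · exact absurd (hVT h) hj.2
          have hWeq : insert x V \ T = {x} :=
            Finset.Subset.antisymm hWsub (Finset.singleton_subset_iff.2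
              (Finset.mem_sdiff.2 ⟨Finset.mem_insert_self _ _, hxT⟩))
          have h1 : cutCard X (insert x V \ T) ≤ (Xbar X x).card := by
            rw [hWeq, cutCard_singleton]
          have h2 : (Xbar X x).card ≤ rt v₀ := by simp [hrt]
          calc cutCard X (insert x V \ T) ≤ rt v₀ := le_trans h1 h2
            _ ≤ rSum T rt := by
                unfold rSum
                exact Finset.single_le_sum (f := rt) (fun i _ => Nat.zero_le _) (hVT hv₀)
        · have hTVs : T ∩ V ⊂ V := by
            refine Finset.ssubset_iff_subset_ne.2 ⟨Finset.inter_subset_right, fun h => ?_⟩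
            exact hVT (by rw [← h]; exact Finset.inter_subset_left)
          have hcut := hOK.2 (T ∩ V) hTV hTVs
          have hsub2 : V \ (T ∩ V) ⊆ insert m V \ T := by
            intro j hj
            rw [Finset.mem_sdiff] at hj ⊢
            refine ⟨Finset.mem_insert_of_mem hj.1, fun hjT => ?_⟩
            exact hj.2 (Finset.mem_inter.2 ⟨hjT, hj.1⟩)
          calc cutCard X (insert m V \ T)
              ≤ cutCard X (V \ (T ∩ V)) := cutCard_anti X hsub2
            _ ≤ rSum (T ∩ V) rv := hcut
            _ ≤ rSum (T ∩ V) rt := Finset.sum_le_sum (fun i _ => hpt i)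
            _ ≤ rSum T rt := rSum_mono Finset.inter_subset_left
  have hsumt : rSum (insert m V) rt = rho X V + (Xbar X m).card := by
    unfold rSum
    rw [Finset.sum_insert hm]
    have hmv : rt m = 0 := by
      have hmv0 : m ≠ v₀ := fun h => hm (h ▸ hv₀)
      rw [hrt, Function.update_of_ne hmv0]
      exact hOK.1 m hm
    rw [hmv, zero_add, hrt, Finset.sum_update_of_mem hv₀]
    have : ∑ x ∈ V \ {v₀}, rv x = rSum V rv - rv v₀ := by
      have h2 : rv v₀ + ∑ x ∈ V \ {v₀}, rv x = rSum V rv := by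
        rw [Finset.sdiff_singleton_eq_erase]
        exact Finset.add_sum_erase V rv hv₀
      omega
    rw [this]
    have hvle : rv v₀ ≤ rSum V rv := by
      unfold rSum
      exact Finset.single_le_sum (f := rv) (fun i _ => Nat.zero_le _) hv₀
    rw [hsum] at *
    omega
  calc rho X (insert m V) ≤ rSum (insert m V) rt := rho_le X hOKt
    _ = rho X V + (Xbar X m).card := hsumt

lemma rho_union_caps (X : Fin n → Finset (Fin k)) {V : Finset (Fin n)}
    (hV : isCoalition X V) (hne : V.Nonempty) (C : Finset (Fin n)) :
    rho X (V ∪ C) ≤ rho X V + ∑ i ∈ C, (Xbar X i).card := by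
  classical
  induction C using Finset.induction_on with
  | empty => simp
  | @insert a C' ha IH =>
    rw [Finset.union_insert]
    rw [Finset.sum_insert ha]
    by_cases haV : a ∈ V ∪ C'
    · rw [Finset.insert_eq_self.2 haV]
      omega
    · have h1 : rho X (insert a (V ∪ C')) ≤ rho X (V ∪ C') + (Xbar X a).card :=
        rho_insert_le X (isCoalition_mono X Finset.subset_union_left hV)
          (hne.mono Finset.subset_union_left)
      omega

open Fin.NatCast in
lemma cyclic_witness (X : Fin n → Finset (Fin k)) (hn : 2 ≤ n) :
    ∃ r : Fin n → ℕ, rateOK X Finset.univ r ∧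
      rSum Finset.univ r = ∑ i, (Xbar X i).card := by
  classical
  haveI : NeZero n := ⟨by omega⟩
  refine ⟨fun i => (Xbar X (i + 1)).card, ⟨fun i hi => absurd (Finset.mem_univ i) hi, ?_⟩, ?_⟩
  · intro T hTne hTsub
    have hex : ∃ l ∈ T, l + 1 ∉ T := by
      by_contra hall
      push_neg at hall
      obtain ⟨t, ht⟩ := hTne
      have hstep : ∀ m : ℕ, t + (m : Fin n) ∈ T := by
        intro m
        induction m with
        | zero => simpa using ht
        | succ m ih =>
          have : ((m + 1 : ℕ) : Fin n) = (m : Fin n) + 1 := by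
            push_cast
            ring
          rw [this, ← add_assoc]
          exact hall _ ih
      have : T = Finset.univ := by
        apply Finset.eq_univ_of_forall
        intro u
        have := hstep ((u - t : Fin n)).val
        rwa [Fin.cast_val_eq_self, add_sub_cancel] at this
      exact hTsub.ne this
    obtain ⟨l, hl, hl1⟩ := hex
    have hl1mem : (l + 1) ∈ Finset.univ \ T := Finset.mem_sdiff.2 ⟨Finset.mem_univ _, hl1⟩
    calc cutCard X (Finset.univ \ T) ≤ cutCard X {l + 1} := by
          apply cutCard_anti
          simpa [Finset.singleton_subset_iff] using hl1mem
      _ = (Xbar X (l + 1)).card := cutCard_singleton X _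
      _ ≤ rSum T (fun i => (Xbar X (i + 1)).card) := by
          unfold rSum
          exact Finset.single_le_sum (f := fun i => (Xbar X (i + 1)).card)
            (fun i _ => Nat.zero_le _) hl
  · unfold rSum
    exact Fintype.sum_equiv (Equiv.addRight (1 : Fin n)) _ _ (fun i => rfl)

end CDEAux2
section Greedy
open Finset
variable {n k : ℕ}

open scoped Classical in
/-- the family of minor coalitions -/
noncomputable def coalFam (X : Fin n → Finset (Fin k)) : Finset (Finset (Fin n)) :=
  Finset.univ.filter (fun S => S ⊂ Finset.univ ∧ isCoalition X S)

lemma mem_coalFam {X : Fin n → Finset (Fin k)} {S : Finset (Fin n)} :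
    S ∈ coalFam X ↔ S ⊂ Finset.univ ∧ isCoalition X S := by
  classical
  simp [coalFam]

open scoped Classical in
noncomputable def roomF (X : Fin n → Finset (Fin k)) (h : Fin n → ℕ) (i : Fin n) :
    Finset ℕ :=
  insert ((Xbar X i).card)
    (((coalFam X).filter (fun S => i ∈ S)).image (fun S => rho X S - ∑ j ∈ S, h j))

noncomputable def room (X : Fin n → Finset (Fin k)) (h : Fin n → ℕ) (i : Fin n) : ℕ :=
  (roomF X h i).min' (Finset.insert_nonempty _ _)

noncomputable def gtake (X : Fin n → Finset (Fin k)) (rstar : ℕ) (h : Fin n → ℕ)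
    (i : Fin n) : ℕ :=
  min (room X h i) (rstar - ∑ j, h j)

noncomputable def gstep (X : Fin n → Finset (Fin k)) (rstar : ℕ) : ℕ → Fin n → ℕ
  | 0 => fun _ => 0
  | (m+1) =>
    if hm : m < n then
      Function.update (gstep X rstar m) ⟨m, hm⟩
        (gstep X rstar m ⟨m, hm⟩ + gtake X rstar (gstep X rstar m) ⟨m, hm⟩)
    else gstep X rstar m

noncomputable def hhat (X : Fin n → Finset (Fin k)) (rstar : ℕ) : Fin n → ℕ :=
  gstep X rstar n

/-- the greedy invariant -/
def GInv (X : Fin n → Finset (Fin k)) (rstar m : ℕ) (h : Fin n → ℕ) : Prop :=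
  (∀ i : Fin n, m ≤ (i : ℕ) → h i = 0) ∧
  (∀ i, h i ≤ (Xbar X i).card) ∧
  (∀ S ∈ coalFam X, ∑ j ∈ S, h j ≤ rho X S) ∧
  (∑ j, h j ≤ rstar) ∧
  (∀ i : Fin n, (i : ℕ) < m →
    h i = (Xbar X i).card ∨ (∃ S ∈ coalFam X, i ∈ S ∧ ∑ j ∈ S, h j = rho X S) ∨
      ∑ j, h j = rstar)

lemma ginv_all (X : Fin n → Finset (Fin k)) (rstar : ℕ) (m : ℕ) :
    GInv X rstar m (gstep X rstar m) := by
  classical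
  induction m with
  | zero =>
    refine ⟨fun i _ => rfl, fun i => Nat.zero_le _, fun S _ => ?_, ?_, fun i h => absurd h (by omega)⟩
    · simp [gstep]
    · simp [gstep]
  | succ m IH =>
    by_cases hm : m < n
    · set i₀ : Fin n := ⟨m, hm⟩ with hi₀
      set h := gstep X rstar m with hh
      set t := gtake X rstar h i₀ with ht
      have hstep : gstep X rstar (m+1) = Function.update h i₀ (h i₀ + t) := by
        rw [gstep, dif_pos hm]
      have hzero : h i₀ = 0 := IH.1 i₀ (le_refl m)
      have hupd : gstep X rstar (m+1) = Function.update h i₀ t := by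
        rw [hstep, hzero, zero_add]
      -- pointwise monotone
      have hmono : ∀ j, h j ≤ Function.update h i₀ t j := by
        intro j
        by_cases hj : j = i₀
        · subst hj; rw [Function.update_self, hzero]; exact Nat.zero_le _
        · rw [Function.update_of_ne hj]
      -- sums over finsets
      have hsum_mem : ∀ S : Finset (Fin n), i₀ ∈ S →
          ∑ j ∈ S, Function.update h i₀ t j = ∑ j ∈ S, h j + t := by
        intro S hiS
        rw [Finset.sum_update_of_mem hiS]
        have h1 : h i₀ + ∑ j ∈ S \ {i₀}, h j = ∑ j ∈ S, h j := by
          rw [Finset.sdiff_singleton_eq_erase]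
          exact Finset.add_sum_erase S h hiS
        omega
      have hsum_not : ∀ S : Finset (Fin n), i₀ ∉ S →
          ∑ j ∈ S, Function.update h i₀ t j = ∑ j ∈ S, h j := by
        intro S hiS
        apply Finset.sum_congr rfl
        intro j hj
        rw [Function.update_of_ne (fun hji => hiS (by rw [← hji]; exact hj))]
      have htot : ∑ j, Function.update h i₀ t j = ∑ j, h j + t :=
        hsum_mem Finset.univ (Finset.mem_univ _)
      -- take bounds
      have ht_cap : t ≤ (Xbar X i₀).card := by
        refine le_trans (min_le_left _ _) ?_
        exact Finset.min'_le _ _ (Finset.mem_insert_self _ _)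
      have ht_S : ∀ S ∈ coalFam X, i₀ ∈ S → t ≤ rho X S - ∑ j ∈ S, h j := by
        intro S hS hiS
        refine le_trans (min_le_left _ _) ?_
        apply Finset.min'_le
        apply Finset.mem_insert_of_mem
        exact Finset.mem_image.2 ⟨S, Finset.mem_filter.2 ⟨hS, hiS⟩, rfl⟩
      have ht_tot : t ≤ rstar - ∑ j, h j := min_le_right _ _
      rw [hupd]
      refine ⟨?_, ?_, ?_, ?_, ?_⟩
      · intro i hi
        have hii : i ≠ i₀ := by
          intro hcon
          rw [hcon] at hi
          have hcon2 : (i₀ : ℕ) = m := rfl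
          omega
        rw [Function.update_of_ne hii]
        exact IH.1 i (by omega)
      · intro i
        by_cases hi : i = i₀
        · subst hi; rw [Function.update_self]; exact ht_cap
        · rw [Function.update_of_ne hi]; exact IH.2.1 i
      · intro S hS
        by_cases hiS : i₀ ∈ S
        · rw [hsum_mem S hiS]
          have h1 := ht_S S hS hiS
          have h2 := IH.2.2.1 S hS
          omega
        · rw [hsum_not S hiS]
          exact IH.2.2.1 S hS
      · rw [htot]
        have := IH.2.2.2.1
        omega
      · intro i hi
        by_cases hii : i = i₀
        · -- the new coordinate
          rw [hii]
          rcases le_or_gt (rstar - ∑ j, h j) (room X h i₀) with hcase | hcase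
          · -- rstar cap binds
            right; right
            rw [htot]
            have : t = rstar - ∑ j, h j := min_eq_right hcase
            have h4 := IH.2.2.2.1
            -- need total + t = rstar; t = rstar - total and total ≤ rstar
            have hpos : ∑ j, h j ≤ rstar := h4
            omega
          · have htroom : t = room X h i₀ := min_eq_left (le_of_lt hcase)
            have hmem : room X h i₀ ∈ roomF X h i₀ := Finset.min'_mem _ _
            rcases Finset.mem_insert.1 hmem with hcap | himg
            · left
              rw [Function.update_self, htroom, hcap]
            · right; left
              obtain ⟨S, hSmem, hSeq⟩ := Finset.mem_image.1 himg
              have hSfam : S ∈ coalFam X := (Finset.mem_filter.1 hSmem).1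
              have hiS : i₀ ∈ S := (Finset.mem_filter.1 hSmem).2
              refine ⟨S, hSfam, hiS, ?_⟩
              rw [hsum_mem S hiS]
              have h2 := IH.2.2.1 S hSfam
              rw [htroom, ← hSeq]
              omega
        · -- old coordinates: preservation
          have hilt : (i : ℕ) < m := by
            have : (i : ℕ) ≠ m := fun hc => hii (by rw [hi₀]; exact Fin.ext hc)
            omega
          rcases IH.2.2.2.2 i hilt with hc | hc | hc
          · left; rw [Function.update_of_ne hii]; exact hc
          · obtain ⟨S, hSfam, hiS, htight⟩ := hc
            right; left
            refine ⟨S, hSfam, hiS, ?_⟩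
            have hle : ∑ j ∈ S, Function.update h i₀ t j ≤ rho X S := by
              by_cases hiS0 : i₀ ∈ S
              · rw [hsum_mem S hiS0]
                have h1 := ht_S S hSfam hiS0
                have h2 := IH.2.2.1 S hSfam
                omega
              · rw [hsum_not S hiS0]; exact IH.2.2.1 S hSfam
            have hge : ∑ j ∈ S, h j ≤ ∑ j ∈ S, Function.update h i₀ t j :=
              Finset.sum_le_sum (fun j _ => hmono j)
            omega
          · right; right
            have hge : ∑ j, h j ≤ ∑ j, Function.update h i₀ t j :=
              Finset.sum_le_sum (fun j _ => hmono j)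
            rw [htot] at *
            have h4 := IH.2.2.2.1
            omega
    · have hstep : gstep X rstar (m+1) = gstep X rstar m := by
        rw [gstep, dif_neg hm]
      rw [hstep]
      refine ⟨fun i hi => IH.1 i (by omega), IH.2.1, IH.2.2.1, IH.2.2.2.1, ?_⟩
      intro i _
      exact IH.2.2.2.2 i (by have := i.isLt; omega)

lemma sup_rho_le (X : Fin n → Finset (Fin k)) (𝒜 : Finset (Finset (Fin n)))
    (hne : 𝒜.Nonempty) (hco : ∀ S ∈ 𝒜, isCoalition X S) :
    ∃ S₀ ∈ 𝒜, rho X (𝒜.sup id) ≤ rho X S₀ := by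
  classical
  induction 𝒜 using Finset.induction_on with
  | empty => exact absurd hne (by simp)
  | @insert S 𝒜' hS IH =>
    rw [Finset.sup_insert]
    rcases 𝒜'.eq_empty_or_nonempty with h' | h'
    · subst h'
      refine ⟨S, Finset.mem_insert_self _ _, ?_⟩
      simp
    · obtain ⟨S₀, hS₀, hrho⟩ := IH h' (fun T hT => hco T (Finset.mem_insert_of_mem hT))
      have hSco : isCoalition X S := hco S (Finset.mem_insert_self _ _)
      have hS₀sub : S₀ ⊆ 𝒜'.sup id := Finset.le_sup (f := id) hS₀
      have hsupco : isCoalition X (𝒜'.sup id) :=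
        isCoalition_mono X hS₀sub (hco S₀ (Finset.mem_insert_of_mem hS₀))
      have hmax := rho_union_le_max X hSco hsupco
      rw [← Finset.sup_eq_union] at hmax
      rcases max_cases (rho X S) (rho X (𝒜'.sup id)) with ⟨heq, _⟩ | ⟨heq, _⟩
      · exact ⟨S, Finset.mem_insert_self _ _, by rw [heq] at hmax; simpa using hmax⟩
      · refine ⟨S₀, Finset.mem_insert_of_mem hS₀, ?_⟩
        rw [heq] at hmax
        exact le_trans (by simpa using hmax) hrho

lemma hhat_sum (X : Fin n → Finset (Fin k)) (rstar : ℕ) (hn : 2 ≤ n) (hk : 1 ≤ k)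
    (hstar : IsLeast {m | ∃ r : Fin n → ℕ, rateOK X Finset.univ r ∧
      rSum Finset.univ r = m} rstar) :
    ∑ j, hhat X rstar j = rstar := by
  classical
  have inv : GInv X rstar n (hhat X rstar) := ginv_all X rstar n
  have hle : ∑ j, hhat X rstar j ≤ rstar := inv.2.2.2.1
  by_contra hne
  have hlt : ∑ j, hhat X rstar j < rstar := lt_of_le_of_ne hle hne
  have hdisj : ∀ i : Fin n, hhat X rstar i = (Xbar X i).card ∨
      ∃ S ∈ coalFam X, i ∈ S ∧ ∑ j ∈ S, hhat X rstar j = rho X S := by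
    intro i
    rcases inv.2.2.2.2 i i.isLt with h | h | h
    · exact Or.inl h
    · exact Or.inr h
    · omega
  set 𝒯 := (coalFam X).filter (fun S => ∑ j ∈ S, hhat X rstar j = rho X S) with h𝒯
  rcases 𝒯.eq_empty_or_nonempty with hTe | hTne
  · -- all capped
    have hcap : ∀ i, hhat X rstar i = (Xbar X i).card := by
      intro i
      rcases hdisj i with h | ⟨S, hS, hiS, htight⟩
      · exact h
      · exfalso
        have : S ∈ 𝒯 := Finset.mem_filter.2 ⟨hS, htight⟩
        rw [hTe] at this
        exact absurd this (Finset.notMem_empty _)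
    obtain ⟨rc, hrcOK, hrcsum⟩ := cyclic_witness X hn
    have h1 : rstar ≤ ∑ i, (Xbar X i).card := hstar.2 ⟨rc, hrcOK, hrcsum⟩
    have h2 : ∑ j, hhat X rstar j = ∑ i, (Xbar X i).card :=
      Finset.sum_congr rfl (fun i _ => hcap i)
    omega
  · obtain ⟨S₀, hS₀mem, hS₀rho⟩ := sup_rho_le X 𝒯 hTne
      (fun S hS => (mem_coalFam.1 (Finset.mem_filter.1 hS).1).2)
    set Tstar := 𝒯.sup id with hTstar
    have hS₀fam : S₀ ∈ coalFam X := (Finset.mem_filter.1 hS₀mem).1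
    have hS₀tight : ∑ j ∈ S₀, hhat X rstar j = rho X S₀ := (Finset.mem_filter.1 hS₀mem).2
    have hS₀coal : isCoalition X S₀ := (mem_coalFam.1 hS₀fam).2
    have hS₀sub : S₀ ⊆ Tstar := Finset.le_sup (f := id) hS₀mem
    have hTstarcoal : isCoalition X Tstar := isCoalition_mono X hS₀sub hS₀coal
    have hTstarne : Tstar.Nonempty := by
      obtain ⟨i, hi, _⟩ := hTstarcoal ⟨0, hk⟩
      exact ⟨i, hi⟩
    have hrhoT : rho X Tstar ≤ ∑ j ∈ Tstar, hhat X rstar j := by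
      calc rho X Tstar ≤ rho X S₀ := hS₀rho
        _ = ∑ j ∈ S₀, hhat X rstar j := hS₀tight.symm
        _ ≤ ∑ j ∈ Tstar, hhat X rstar j := Finset.sum_le_sum_of_subset hS₀sub
    have houts : ∀ i ∈ Finset.univ \ Tstar, hhat X rstar i = (Xbar X i).card := by
      intro i hi
      have hiT : i ∉ Tstar := (Finset.mem_sdiff.1 hi).2
      rcases hdisj i with h | ⟨S, hS, hiS, htight⟩
      · exact h
      · exfalso
        have hS𝒯 : S ∈ 𝒯 := Finset.mem_filter.2 ⟨hS, htight⟩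
        exact hiT (Finset.le_sup (f := id) hS𝒯 hiS)
    have hcov : Tstar ∪ (Finset.univ \ Tstar) = Finset.univ :=
      Finset.union_sdiff_of_subset (Finset.subset_univ _)
    have h1 : rho X Finset.univ ≤ rho X Tstar + ∑ i ∈ Finset.univ \ Tstar, (Xbar X i).card := by
      have := rho_union_caps X hTstarcoal hTstarne (Finset.univ \ Tstar)
      rwa [hcov] at this
    obtain ⟨ru, hruOK, hrusum⟩ := rho_spec X Finset.univ
    have h2 : rstar ≤ rho X Finset.univ := hstar.2 ⟨ru, hruOK, hrusum⟩
    have h3 : ∑ i ∈ Finset.univ \ Tstar, (Xbar X i).card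
        = ∑ i ∈ Finset.univ \ Tstar, hhat X rstar i :=
      Finset.sum_congr rfl (fun i hi => (houts i hi).symm)
    have h4 : ∑ i ∈ Finset.univ \ Tstar, hhat X rstar i + ∑ i ∈ Tstar, hhat X rstar i
        = ∑ i, hhat X rstar i := Finset.sum_sdiff (Finset.subset_univ _)
    omega

lemma hhat_cap (X : Fin n → Finset (Fin k)) (rstar : ℕ) (i : Fin n) :
    hhat X rstar i ≤ (Xbar X i).card := by
  have inv : GInv X rstar n (hhat X rstar) := ginv_all X rstar n
  exact inv.2.1 i

lemma hhat_coal (X : Fin n → Finset (Fin k)) (rstar : ℕ) {S : Finset (Fin n)}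
    (hS : S ⊂ Finset.univ) (hSco : isCoalition X S) :
    ∑ j ∈ S, hhat X rstar j ≤ rho X S := by
  have inv : GInv X rstar n (hhat X rstar) := ginv_all X rstar n
  exact inv.2.2.1 S (mem_coalFam.2 ⟨hS, hSco⟩)

end Greedy
section Transport
open Finset
variable {n : ℕ}

lemma transport_select (T : ℕ) (a b : Fin n → ℕ)
    (ha : ∑ j, a j = T + 1) (hb : ∑ j, b j = T + 1)
    (hcap : ∀ j, a j + b j ≤ T + 1) :
    ∃ l m : Fin n, l ≠ m ∧ 0 < a l ∧ 0 < b m ∧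
      ∀ j, j ≠ l → j ≠ m → a j + b j ≤ T := by
  classical
  have hane : ∃ l, 0 < a l := by
    by_contra hno
    push_neg at hno
    have : ∑ j, a j = 0 := Finset.sum_eq_zero (fun j _ => by have := hno j; omega)
    omega
  by_cases h2 : ∃ j₁ j₂ : Fin n, j₁ ≠ j₂ ∧ a j₁ + b j₁ = T + 1 ∧ a j₂ + b j₂ = T + 1
  · obtain ⟨j₁, j₂, hne, ht1, ht2⟩ := h2
    have hpair : ∀ f : Fin n → ℕ, ∑ j, f j = T + 1 →
        f j₁ + f j₂ ≤ T + 1 ∧ (∀ j, j ≠ j₁ → j ≠ j₂ → (a j + b j = 0)) := by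
      intro f hf
      constructor
      · have hsub : ({j₁, j₂} : Finset (Fin n)) ⊆ Finset.univ := Finset.subset_univ _
        have := Finset.sum_le_sum_of_subset hsub (f := f)
        rw [Finset.sum_pair hne, hf] at this
        exact this
      · intro j hj1 hj2
        have hsplit : ∑ x ∈ Finset.univ \ ({j₁, j₂} : Finset (Fin n)), (a x + b x) +
            ∑ x ∈ ({j₁, j₂} : Finset (Fin n)), (a x + b x) = ∑ x, (a x + b x) :=
          Finset.sum_sdiff (Finset.subset_univ _)
        have hsum_all : ∑ x : Fin n, (a x + b x) = 2 * T + 2 := by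
          rw [Finset.sum_add_distrib, ha, hb]; ring
        rw [Finset.sum_pair hne] at hsplit
        have hzero : ∑ x ∈ Finset.univ \ {j₁, j₂}, (a x + b x) = 0 := by omega
        have hjmem : j ∈ Finset.univ \ ({j₁, j₂} : Finset (Fin n)) := by
          simp [hj1, hj2]
        exact Nat.eq_zero_of_le_zero (le_trans (Finset.single_le_sum
          (f := fun x => a x + b x) (fun x _ => Nat.zero_le _) hjmem) (le_of_eq hzero))
    have hothers := (hpair a ha).2
    have haa : a j₁ + a j₂ = T + 1 := by
      have h1 : ∑ x ∈ ({j₁, j₂} : Finset (Fin n)), a x +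
          ∑ x ∈ Finset.univ \ {j₁, j₂}, a x = ∑ x, a x := by
        rw [add_comm]; exact Finset.sum_sdiff (Finset.subset_univ _)
      have h2 : ∑ x ∈ Finset.univ \ {j₁, j₂}, a x = 0 := by
        apply Finset.sum_eq_zero
        intro x hx
        rw [Finset.mem_sdiff, Finset.mem_insert, Finset.mem_singleton] at hx
        have := hothers x (fun h => hx.2 (Or.inl h)) (fun h => hx.2 (Or.inr h))
        omega
      rw [Finset.sum_pair hne] at h1
      omega
    have hbb : b j₁ + b j₂ = T + 1 := by
      have h1 : ∑ x ∈ ({j₁, j₂} : Finset (Fin n)), b x +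
          ∑ x ∈ Finset.univ \ {j₁, j₂}, b x = ∑ x, b x := by
        rw [add_comm]; exact Finset.sum_sdiff (Finset.subset_univ _)
      have h2 : ∑ x ∈ Finset.univ \ {j₁, j₂}, b x = 0 := by
        apply Finset.sum_eq_zero
        intro x hx
        rw [Finset.mem_sdiff, Finset.mem_insert, Finset.mem_singleton] at hx
        have := hothers x (fun h => hx.2 (Or.inl h)) (fun h => hx.2 (Or.inr h))
        omega
      rw [Finset.sum_pair hne] at h1
      omega
    by_cases ha1 : 0 < a j₁
    · refine ⟨j₁, j₂, hne, ha1, by omega, ?_⟩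
      intro j hj1 hj2
      have := hothers j hj1 hj2
      omega
    · refine ⟨j₂, j₁, hne.symm, by omega, by omega, ?_⟩
      intro j hj1 hj2
      have := hothers j hj2 hj1
      omega
  · push_neg at h2
    by_cases hex : ∃ j₀, a j₀ + b j₀ = T + 1
    · obtain ⟨j₀, hj₀⟩ := hex
      have huniq : ∀ j, a j + b j = T + 1 → j = j₀ := by
        intro j hj
        by_contra hne
        exact (h2 j j₀ hne hj) hj₀
      by_cases ha0 : 0 < a j₀
      · have hm : ∃ m, m ≠ j₀ ∧ 0 < b m := by
          by_contra hno
          push_neg at hno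
          have hmass : ∀ m, m ≠ j₀ → b m = 0 := fun m hm => by have := hno m hm; omega
          have : ∑ j, b j = b j₀ := by
            rw [← Finset.add_sum_erase _ b (Finset.mem_univ j₀)]
            have : ∑ j ∈ Finset.univ.erase j₀, b j = 0 :=
              Finset.sum_eq_zero (fun j hj => hmass j (Finset.mem_erase.1 hj).1)
            omega
          have hcap0 := hcap j₀
          omega
        obtain ⟨m, hmne, hmpos⟩ := hm
        refine ⟨j₀, m, hmne.symm, ha0, hmpos, ?_⟩
        intro j hj1 _
        have : a j + b j ≠ T + 1 := fun h => hj1 (huniq j h)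
        have := hcap j
        omega
      · have hb0 : b j₀ = T + 1 := by omega
        obtain ⟨l, hl⟩ := hane
        have hlne : l ≠ j₀ := fun h => by rw [h] at hl; omega
        refine ⟨l, j₀, hlne, hl, by omega, ?_⟩
        intro j _ hj2
        have : a j + b j ≠ T + 1 := fun h => hj2 (huniq j h)
        have := hcap j
        omega
    · push_neg at hex
      obtain ⟨l, hl⟩ := hane
      have hm : ∃ m, m ≠ l ∧ 0 < b m := by
        by_contra hno
        push_neg at hno
        have hmass : ∀ m, m ≠ l → b m = 0 := fun m hm => by have := hno m hm; omega
        have : ∑ j, b j = b l := by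
          rw [← Finset.add_sum_erase _ b (Finset.mem_univ l)]
          have : ∑ j ∈ Finset.univ.erase l, b j = 0 :=
            Finset.sum_eq_zero (fun j hj => hmass j (Finset.mem_erase.1 hj).1)
          omega
        have := hcap l
        omega
      obtain ⟨m, hmne, hmpos⟩ := hm
      refine ⟨l, m, hmne.symm, hl, hmpos, ?_⟩
      intro j _ _
      have := hex j
      have := hcap j
      omega

lemma transport (T : ℕ) : ∀ (a b : Fin n → ℕ),
    (∑ j, a j = T) → (∑ j, b j = T) → (∀ j, a j + b j ≤ T) →
    ∃ q : Fin n → Fin n → ℕ, (∀ i, q i i = 0) ∧ (∀ i, ∑ j, q i j = a i) ∧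
      (∀ j, ∑ i, q i j = b j) := by
  classical
  induction T with
  | zero =>
    intro a b ha hb _
    refine ⟨fun _ _ => 0, fun i => rfl, fun i => ?_, fun j => ?_⟩
    · simp
      have : a i = 0 := by
        have := Finset.single_le_sum (f := a) (fun j _ => Nat.zero_le _) (Finset.mem_univ i)
        omega
      omega
    · simp
      have : b j = 0 := by
        have := Finset.single_le_sum (f := b) (fun i _ => Nat.zero_le _) (Finset.mem_univ j)
        omega
      omega
  | succ T IH =>
    intro a b ha hb hcap
    obtain ⟨l, m, hlm, hal, hbm, hothers⟩ := transport_select T a b ha hb hcap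
    set a' := Function.update a l (a l - 1) with ha'
    set b' := Function.update b m (b m - 1) with hb'
    have hsa : ∑ j, a' j = T := by
      rw [ha', Finset.sum_update_of_mem (Finset.mem_univ l)]
      have h1 : a l + ∑ x ∈ Finset.univ \ {l}, a x = T + 1 := by
        rw [Finset.sdiff_singleton_eq_erase]
        rw [Finset.add_sum_erase _ a (Finset.mem_univ l)]
        exact ha
      omega
    have hsb : ∑ j, b' j = T := by
      rw [hb', Finset.sum_update_of_mem (Finset.mem_univ m)]
      have h1 : b m + ∑ x ∈ Finset.univ \ {m}, b x = T + 1 := by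
        rw [Finset.sdiff_singleton_eq_erase]
        rw [Finset.add_sum_erase _ b (Finset.mem_univ m)]
        exact hb
      omega
    have hcap' : ∀ j, a' j + b' j ≤ T := by
      intro j
      by_cases hjl : j = l
      · subst hjl
        rw [ha', hb', Function.update_self, Function.update_of_ne hlm]
        have := hcap j
        omega
      · by_cases hjm : j = m
        · subst hjm
          rw [ha', hb', Function.update_of_ne hjl, Function.update_self]
          have := hcap j
          omega
        · rw [ha', hb', Function.update_of_ne hjl, Function.update_of_ne hjm]
          exact hothers j hjl hjm
    obtain ⟨q', hdiag, hrow, hcol⟩ := IH a' b' hsa hsb hcap'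
    refine ⟨fun i j => q' i j + if i = l ∧ j = m then 1 else 0, ?_, ?_, ?_⟩
    · intro i
      simp only []
      rw [hdiag i]
      simp only [Nat.zero_add]
      rw [if_neg]
      rintro ⟨h1, h2⟩
      exact hlm (by rw [← h1, h2])
    · intro i
      rw [Finset.sum_add_distrib, hrow i]
      have hite : ∑ j, (if i = l ∧ j = m then 1 else 0) = if i = l then 1 else 0 := by
        by_cases hil : i = l
        · simp [hil]
        · simp [hil]
      rw [hite]
      by_cases hil : i = l
      · rw [if_pos hil, hil, ha', Function.update_self]
        omega
      · rw [if_neg hil, ha', Function.update_of_ne hil]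
        omega
    · intro j
      rw [Finset.sum_add_distrib, hcol j]
      have hite : ∑ i, (if i = l ∧ j = m then 1 else 0) = if j = m then 1 else 0 := by
        by_cases hjm : j = m
        · simp [hjm]
        · simp [hjm]
      rw [hite]
      by_cases hjm : j = m
      · rw [if_pos hjm, hjm, hb', Function.update_self]
        omega
      · rw [if_neg hjm, hb', Function.update_of_ne hjm]
        omega
section MainAux
open Finset
variable {n k : ℕ}

lemma pay_expand_plus {S : Finset (Fin n)} {p : Fin n → Fin n → ℝ}
    (hmat : isPayMatrix p) (hpay : payOK S p) {i : Fin n} (hi : i ∈ S) :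
    pPlus p i = ∑ j ∈ S, p j i := by
  classical
  unfold pPlus
  rw [Finset.sum_erase (f := fun j => p j i) Finset.univ (hmat.2 i)]
  refine (Finset.sum_subset (Finset.subset_univ S) ?_).symm
  intro j _ hj
  exact (hpay i hi j hj).2

lemma pay_expand_minus {S : Finset (Fin n)} {p : Fin n → Fin n → ℝ}
    (hmat : isPayMatrix p) (hpay : payOK S p) {i : Fin n} (hi : i ∈ S) :
    pMinus p i = ∑ j ∈ S, p i j := by
  classical
  unfold pMinus
  rw [Finset.sum_erase _ (hmat.2 i)]
  refine (Finset.sum_subset (Finset.subset_univ S) ?_).symm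
  intro j _ hj
  exact (hpay i hi j hj).1

lemma pay_cancel {S : Finset (Fin n)} {p : Fin n → Fin n → ℝ}
    (hmat : isPayMatrix p) (hpay : payOK S p) :
    ∑ i ∈ S, pPlus p i = ∑ i ∈ S, pMinus p i := by
  classical
  rw [Finset.sum_congr rfl (fun i hi => pay_expand_plus hmat hpay hi),
    Finset.sum_congr rfl (fun i hi => pay_expand_minus hmat hpay hi)]
  exact Finset.sum_comm

lemma util_sum_eq (X : Fin n → Finset (Fin k)) {S : Finset (Fin n)} (r : Fin n → ℕ)
    {p : Fin n → Fin n → ℝ} (hmat : isPayMatrix p) (hpay : payOK S p) :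
    ∑ i ∈ S, util X r p i = (∑ i ∈ S, ((Xbar X i).card : ℝ)) - (rSum S r : ℝ) := by
  classical
  have h1 : ∀ i ∈ S, util X r p i
      = (pPlus p i - pMinus p i) + (((Xbar X i).card : ℝ) - (r i : ℝ)) := by
    intro i _
    unfold util
    ring
  rw [Finset.sum_congr rfl h1, Finset.sum_add_distrib, Finset.sum_sub_distrib,
    pay_cancel hmat hpay, Finset.sum_sub_distrib]
  have : (rSum S r : ℝ) = ∑ i ∈ S, (r i : ℝ) := by
    unfold rSum
    push_cast
    rfl
  rw [this]
  ring

/-- the cheap feasible pair: rates achieving `rstar`, payments realizing `hhat` -/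
lemma exists_cheap_feasible (X : Fin n → Finset (Fin k)) (rstar : ℕ) (hn : 2 ≤ n)
    (hk : 1 ≤ k)
    (hstar : IsLeast {m | ∃ r : Fin n → ℕ, rateOK X Finset.univ r ∧
      rSum Finset.univ r = m} rstar) :
    ∃ (rs : Fin n → ℕ) (ph : Fin n → Fin n → ℝ),
      feasible X rs ph ∧ rSum Finset.univ rs = rstar ∧
      pSum Finset.univ ph = (rstar : ℝ) := by
  classical
  obtain ⟨rs, hrsOK, hrssum⟩ := hstar.1
  set a := hhat X rstar with hadef
  have hsa : ∑ j, a j = rstar := hhat_sum X rstar hn hk hstar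
  have hsb : ∑ j, rs j = rstar := hrssum
  have hcap : ∀ j, a j + rs j ≤ rstar := by
    intro j
    have h1 : a j ≤ (Xbar X j).card := hhat_cap X rstar j
    have h2 : (Xbar X j).card + rs j ≤ rstar := by
      have hne : (Finset.univ.erase j).Nonempty := by
        rw [← Finset.card_pos, Finset.card_erase_of_mem (Finset.mem_univ j)]
        simp only [Finset.card_univ, Fintype.card_fin]
        omega
      have hsub : Finset.univ.erase j ⊂ Finset.univ :=
        Finset.erase_ssubset (Finset.mem_univ j)
      have hcut := hrsOK.2 (Finset.univ.erase j) hne hsub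
      have hset : Finset.univ \ Finset.univ.erase j = {j} := by
        ext x
        simp only [Finset.mem_sdiff, Finset.mem_univ, true_and, Finset.mem_erase,
          Finset.mem_singleton]
        tauto
      rw [hset, cutCard_singleton] at hcut
      have hsplit : rs j + rSum (Finset.univ.erase j) rs = rSum Finset.univ rs :=
        Finset.add_sum_erase _ rs (Finset.mem_univ j)
      unfold rSum at hsplit hrssum
      unfold rSum at hcut
      omega
    omega
  obtain ⟨q, hdiag, hrow, hcol⟩ := transport rstar a rs hsa hsb hcap
  set ph : Fin n → Fin n → ℝ := fun i j => (q i j : ℝ) with hph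
  have hplus : ∀ i, pPlus ph i = (rs i : ℝ) := by
    intro i
    unfold pPlus
    have hzero : ph i i = 0 := by rw [hph]; simp [hdiag i]
    rw [Finset.sum_erase (f := fun j => ph j i) Finset.univ hzero]
    rw [hph]
    push_cast [← hcol i]
    rfl
  have hminus : ∀ i, pMinus ph i = (a i : ℝ) := by
    intro i
    unfold pMinus
    have hzero : ph i i = 0 := by rw [hph]; simp [hdiag i]
    rw [Finset.sum_erase _ hzero]
    rw [hph]
    push_cast [← hrow i]
    rfl
  have hutil : ∀ i, util X rs ph i = ((Xbar X i).card : ℝ) - (a i : ℝ) := by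
    intro i
    unfold util
    rw [hplus i, hminus i]
    ring
  have hmat : isPayMatrix ph := by
    constructor
    · intro i j
      rw [hph]
      positivity
    · intro i
      rw [hph]
      simp [hdiag i]
  have hpayOK : payOK Finset.univ ph := by
    intro i _ j hj
    exact absurd (Finset.mem_univ j) hj
  refine ⟨rs, ph, ⟨hrsOK, hmat, hpayOK, ?_, ?_⟩, hrssum, ?_⟩
  · -- rational
    intro i _
    constructor
    · rw [hplus i]
    · rw [hminus i]
      exact_mod_cast hhat_cap X rstar i
  · -- no blocking coalition
    rintro ⟨S, r'', p'', hSsub, hSco, hOK'', hmat'', hpay'', hrat'', hdom, i₀, hi₀, hstrict⟩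
    have hblocksum : ∑ i ∈ S, util X r'' p'' i
        = (∑ i ∈ S, ((Xbar X i).card : ℝ)) - (rSum S r'' : ℝ) :=
      util_sum_eq X r'' hmat'' hpay''
    have hoursum : ∑ i ∈ S, util X rs ph i
        = (∑ i ∈ S, ((Xbar X i).card : ℝ)) - ((∑ i ∈ S, a i : ℕ) : ℝ) := by
      rw [Finset.sum_congr rfl (fun i _ => hutil i), Finset.sum_sub_distrib]
      push_cast
      rfl
    have hlt : ∑ i ∈ S, util X rs ph i < ∑ i ∈ S, util X r'' p'' i :=
      Finset.sum_lt_sum hdom ⟨i₀, hi₀, hstrict⟩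
    rw [hblocksum, hoursum] at hlt
    have hlt2 : rSum S r'' < ∑ i ∈ S, a i := by
      have h3 : (rSum S r'' : ℝ) < ((∑ i ∈ S, a i : ℕ) : ℝ) := by linarith
      exact_mod_cast h3
    have hge : ∑ i ∈ S, a i ≤ rho X S := hhat_coal X rstar hSsub hSco
    have hle2 : rho X S ≤ rSum S r'' := rho_le X hOK''
    omega
  · -- total payment
    unfold pSum
    rw [hph]
    push_cast
    have : ∀ i : Fin n, ∑ j, (q i j : ℝ) = ((a i : ℕ) : ℝ) := by
      intro i
      rw [← hrow i]
      push_cast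
      rfl
    rw [Finset.sum_congr rfl (fun i _ => this i)]
    rw [← Nat.cast_sum]
    exact_mod_cast hsa

end MainAux
/-- For every optimal pair `(r̃,p̃)`,
`min_{i∈N} u_i(r̃,p̃) ≤ k − max( max_{i∈N} |X_i| , (∑_{i∈N} |X_i| + r*_N)/n )`,
where `r*_N` is the minimum sum-rate over `𝓡_N`. -/
theorem optimal_min_utility_upper_bound (n k : ℕ) (hn : 2 ≤ n) (hk : 1 ≤ k)
    (X : Fin n → Finset (Fin k)) (hX : isCoalition X Finset.univ)
    (rstar : ℕ)
    (hstar : IsLeast {m | ∃ r : Fin n → ℕ, rateOK X Finset.univ r ∧ rSum Finset.univ r = m} rstar)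
    (r : Fin n → ℕ) (p : Fin n → Fin n → ℝ) (hopt : optimal X r p) :
    Finset.univ.inf' ⟨⟨0, by omega⟩, Finset.mem_univ _⟩ (util X r p) ≤
      (k : ℝ) -
        max ((Finset.univ.sup' ⟨⟨0, by omega⟩, Finset.mem_univ _⟩ fun i => (X i).card : ℕ) : ℝ)
          (((∑ i, ((X i).card : ℝ)) + (rstar : ℝ)) / (n : ℝ)) := by
  classical
  obtain ⟨hfeas, hnotbetter⟩ := hopt
  obtain ⟨hrOK, hmat, hpay, hrat, hnoblock⟩ := hfeas
  have hne : (Finset.univ : Finset (Fin n)).Nonempty := ⟨⟨0, by omega⟩, Finset.mem_univ _⟩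
  have hnR : (0:ℝ) < (n:ℝ) := by
    have : (0:ℕ) < n := by omega
    exact_mod_cast this
  have hXc : ∀ i : Fin n, ((Xbar X i).card : ℝ) = (k : ℝ) - ((X i).card : ℝ) := by
    intro i
    have h2 : (X i).card ≤ k := by
      have := Finset.card_le_univ (X i)
      simpa using this
    have h1 : (Xbar X i).card = k - (X i).card := by
      unfold Xbar
      rw [Finset.card_compl]
      simp
    rw [h1, Nat.cast_sub h2]
  have hrge : rstar ≤ rSum Finset.univ r := hstar.2 ⟨r, hrOK, rfl⟩
  obtain ⟨rs, ph, hfeas2, hrs, hps⟩ := exists_cheap_feasible X rstar hn hk hstar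
  have hcons : ¬(rSum Finset.univ rs < rSum Finset.univ r ∨
      pSum Finset.univ ph < pSum Finset.univ p) :=
    fun hcon => hnotbetter ⟨rs, ph, hfeas2, hcon⟩
  push_neg at hcons
  obtain ⟨hc1, hc2⟩ := hcons
  rw [hrs] at hc1
  rw [hps] at hc2
  -- total payment of the optimal pair
  have hpsum_eq : pSum Finset.univ p = ∑ i, pPlus p i := by
    unfold pSum
    have hrow : ∀ i : Fin n, ∑ j, p i j = pMinus p i := by
      intro i
      exact (Finset.sum_erase (f := fun j => p i j) Finset.univ (hmat.2 i)).symm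
    rw [Finset.sum_congr rfl (fun i _ => hrow i), ← pay_cancel hmat hpay]
  -- the A bound : utility of any user is controlled
  have hA : ∀ istar : Fin n, util X r p istar ≤ ((Xbar X istar).card : ℝ) := by
    intro istar
    have hterm : ∀ i : Fin n, (0:ℝ) ≤ pPlus p i - (r i : ℝ) := by
      intro i
      have := (hrat i (Finset.mem_univ i)).1
      linarith
    have h1 : pPlus p istar - (r istar : ℝ) ≤ ∑ i, (pPlus p i - (r i : ℝ)) :=
      Finset.single_le_sum (f := fun i => pPlus p i - (r i : ℝ))
        (fun i _ => hterm i) (Finset.mem_univ istar)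
    have h2 : util X r p istar - ((Xbar X istar).card : ℝ)
        ≤ pPlus p istar - (r istar : ℝ) := by
      unfold util
      have hm0 : (0:ℝ) ≤ pMinus p istar := by
        unfold pMinus
        exact Finset.sum_nonneg (fun j _ => hmat.1 istar j)
      linarith
    have h3 : ∑ i, (pPlus p i - (r i : ℝ)) = (∑ i, pPlus p i) - (rSum Finset.univ r : ℝ) := by
      rw [Finset.sum_sub_distrib]
      have : (rSum Finset.univ r : ℝ) = ∑ i, (r i : ℝ) := by
        unfold rSum
        push_cast
        rfl
      rw [this]
    have h4 : (rSum Finset.univ r : ℝ) ≥ (rstar : ℝ) := by exact_mod_cast hrge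
    rw [h3] at h1
    rw [← hpsum_eq] at h1
    linarith
  -- the B bound : average utility
  have hsumutil : ∑ i, util X r p i
      = (∑ i, ((Xbar X i).card : ℝ)) - (rSum Finset.univ r : ℝ) :=
    util_sum_eq X r hmat hpay
  have hxbarsum : ∑ i, ((Xbar X i).card : ℝ) = (n:ℝ) * (k:ℝ) - ∑ i, ((X i).card : ℝ) := by
    rw [Finset.sum_congr rfl (fun i _ => hXc i), Finset.sum_sub_distrib]
    congr 1
    rw [Finset.sum_const, Finset.card_univ]
    simp [nsmul_eq_mul]
  have hinf_le : ∀ i : Fin n, Finset.univ.inf' hne (util X r p) ≤ util X r p i :=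
    fun i => Finset.inf'_le _ (Finset.mem_univ i)
  have hmul : (n:ℝ) * Finset.univ.inf' hne (util X r p) ≤ ∑ i, util X r p i := by
    have := Finset.card_nsmul_le_sum Finset.univ (util X r p)
      (Finset.univ.inf' hne (util X r p)) (fun i _ => hinf_le i)
    rw [Finset.card_univ] at this
    simpa [nsmul_eq_mul] using this
  have hB : Finset.univ.inf' hne (util X r p)
      ≤ (k:ℝ) - ((∑ i, ((X i).card : ℝ)) + (rstar : ℝ)) / (n:ℝ) := by
    have h4 : (rstar : ℝ) ≤ (rSum Finset.univ r : ℝ) := by exact_mod_cast hrge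
    have h5 : ∑ i, util X r p i
        ≤ (n:ℝ) * (k:ℝ) - ∑ i, ((X i).card : ℝ) - (rstar : ℝ) := by
      rw [hsumutil, hxbarsum]
      linarith
    have h6 : (n:ℝ) * Finset.univ.inf' hne (util X r p)
        ≤ (n:ℝ) * ((k:ℝ) - ((∑ i, ((X i).card : ℝ)) + (rstar : ℝ)) / (n:ℝ)) := by
      have hexp : (n:ℝ) * ((k:ℝ) - ((∑ i, ((X i).card : ℝ)) + (rstar : ℝ)) / (n:ℝ))
          = (n:ℝ) * (k:ℝ) - ((∑ i, ((X i).card : ℝ)) + (rstar : ℝ)) := by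
        field_simp
      rw [hexp]
      linarith
    exact le_of_mul_le_mul_left (by linarith [h6]) hnR
  -- combine
  obtain ⟨istar, -, hsupeq⟩ := Finset.exists_mem_eq_sup'
    (⟨⟨0, by omega⟩, Finset.mem_univ _⟩ : (Finset.univ : Finset (Fin n)).Nonempty)
    (fun i => (X i).card)
  rcases le_total
    (((Finset.univ.sup' ⟨⟨0, by omega⟩, Finset.mem_univ _⟩ fun i => (X i).card : ℕ) : ℝ))
    (((∑ i, ((X i).card : ℝ)) + (rstar : ℝ)) / (n : ℝ)) with hm | hm
  · rw [max_eq_right hm]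
    exact hB
  · rw [max_eq_left hm]
    have hcast : ((Finset.univ.sup' ⟨⟨0, by omega⟩, Finset.mem_univ _⟩
        fun i => (X i).card : ℕ) : ℝ) = ((X istar).card : ℝ) := by
      exact_mod_cast congrArg Nat.cast hsupeq
    rw [hcast]
    calc Finset.univ.inf' _ (util X r p) ≤ util X r p istar := hinf_le istar
      _ ≤ ((Xbar X istar).card : ℝ) := hA istar
      _ = (k:ℝ) - ((X istar).card : ℝ) := hXc istar
end Transport
end

section
/- For every greedy transmission sequence v_1,…,v_L, every coalition S ⊆ N (i.e., ⋃_{i∈S} X_i = K), and every S-omniscience-achieving transmission scheme of length M, the round l_S at which all users in S become complete under the greedy sequence satisfies l_S ≤ M. In particular, under greedy max-knowledge scheduling, every coalition S achieves omniscience within the minimum number of transmissions that any scheme internal to S would need. -/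
/- Setting: a finite field `F = 𝔽_q`, `k` packets, `n` users. `stdVecs F (X i)` is the set
`U_i` of standard basis vectors of `F^k` indexed by the initial packet set `X i` of user `i`;
`know F X i V = span(U_i ∪ V)` is the knowledge of user `i` after receiving the packets with
encoding vectors `V`, and `dimKnow` its dimension. `Vset v l = {v_0, …, v_{l-1}}`,
`Rset F X v t l` is the set of users whose knowledge before round `l` does not contain `U_{t l}`,
and `IsGreedy` describes a run of the greedy (maximum-knowledge transmitter) algorithm. -/

noncomputable section
open scoped Classical

/-- The set `U_A` of standard basis vectors of `F^k` indexed by `A`. -/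
def stdVecs {k : ℕ} (F : Type*) [Field F] (A : Finset (Fin k)) : Set (Fin k → F) :=
  (fun j => Pi.single j (1 : F)) '' (A : Set (Fin k))

/-- Knowledge of user `i` given received encoding vectors `V`: `span(U_i ∪ V)`. -/
def know {n k : ℕ} (F : Type*) [Field F] (X : Fin n → Finset (Fin k)) (i : Fin n)
    (V : Set (Fin k → F)) : Submodule F (Fin k → F) :=
  Submodule.span F (stdVecs F (X i) ∪ V)

/-- Size of knowledge: `dim span(U_i ∪ V)`. -/
def dimKnow {n k : ℕ} (F : Type*) [Field F] (X : Fin n → Finset (Fin k)) (i : Fin n)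
    (V : Set (Fin k → F)) : ℕ :=
  Module.finrank F (know F X i V)

/-- The encoding vectors transmitted in rounds `0, …, l−1`. -/
def Vset {k : ℕ} {F : Type*} (v : ℕ → Fin k → F) (l : ℕ) : Set (Fin k → F) :=
  v '' {m | m < l}

/-- `R_l`: users whose knowledge before round `l` does not contain the transmitter's `U_{t l}`. -/
def Rset {n k : ℕ} (F : Type*) [Field F] (X : Fin n → Finset (Fin k))
    (v : ℕ → Fin k → F) (t : ℕ → Fin n) (l : ℕ) : Finset (Fin n) :=
  Finset.univ.filter fun i =>
    ¬ stdVecs F (X (t l)) ⊆ (know F X i (Vset v l) : Set (Fin k → F))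

/-- A greedy transmission sequence `v_0, …, v_{L-1}` with transmitters `t_0, …, t_{L-1}`:
in each round some user is incomplete, the transmitter has maximum knowledge, transmits a
vector from its own span that is innovative to every user in `R_l`; after round `L-1`
everyone is complete. -/
def IsGreedy {n k : ℕ} (F : Type*) [Field F] (X : Fin n → Finset (Fin k))
    (L : ℕ) (v : ℕ → Fin k → F) (t : ℕ → Fin n) : Prop :=
  (∀ l < L,
    (∃ i, dimKnow F X i (Vset v l) < k) ∧
    (∀ i, dimKnow F X i (Vset v l) ≤ dimKnow F X (t l) (Vset v l)) ∧
    v l ∈ Submodule.span F (stdVecs F (X (t l))) ∧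
    v l ∉ Submodule.span F ((⋃ i ∈ Rset F X v t l, stdVecs F (X i)) ∪ Vset v l)) ∧
  ∀ i, dimKnow F X i (Vset v L) = k

end

noncomputable section
open scoped Classical

section AuxProof

open Finset

variable {F : Type*} [Field F] {n k : ℕ}

lemma dim_le_k (W : Submodule F (Fin k → F)) : Module.finrank F W ≤ k := by
  have h := Submodule.finrank_le W
  simpa [Module.finrank_pi] using h

lemma span_eq_top_of_single_mem (s : Set (Fin k → F))
    (hs : ∀ j : Fin k, Pi.single j (1 : F) ∈ s) : Submodule.span F s = ⊤ := by
  rw [eq_top_iff]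
  intro x _
  have h1 : ∀ j : Fin k, (Pi.single j (x j) : Fin k → F) = x j • (Pi.single j (1 : F) : Fin k → F) := by
    intro j; ext j'
    rcases eq_or_ne j' j with rfl | hne
    · simp
    · simp [Pi.single_eq_of_ne hne]
  have hx : x = ∑ j : Fin k, x j • (Pi.single j (1 : F) : Fin k → F) := by
    calc x = ∑ j, Pi.single j (x j) := (Finset.univ_sum_single x).symm
    _ = ∑ j, x j • (Pi.single j (1 : F) : Fin k → F) := Finset.sum_congr rfl fun j _ => h1 j
  rw [hx]
  exact Submodule.sum_mem _ fun j _ =>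
    Submodule.smul_mem _ _ (Submodule.subset_span (hs j))

/-- pooled knowledge of a set of users -/
def pool (X : Fin n → Finset (Fin k)) (v : ℕ → Fin k → F) (l : ℕ) (T : Finset (Fin n)) :
    Submodule F (Fin k → F) :=
  T.sup fun j => know F X j (Vset v l)

lemma know_le_pool {X : Fin n → Finset (Fin k)} {v : ℕ → Fin k → F} {l : ℕ}
    {T : Finset (Fin n)} {j : Fin n} (hj : j ∈ T) :
    know F X j (Vset v l) ≤ pool X v l T := Finset.le_sup (f := fun j => know F X j (Vset v l)) hj

lemma pool_singleton (X : Fin n → Finset (Fin k)) (v : ℕ → Fin k → F) (l : ℕ) (j : Fin n) :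
    pool X v l {j} = know F X j (Vset v l) := Finset.sup_singleton

lemma pool_mono {X : Fin n → Finset (Fin k)} {v : ℕ → Fin k → F} {l : ℕ}
    {T T' : Finset (Fin n)} (h : T ⊆ T') : pool X v l T ≤ pool X v l T' := Finset.sup_mono h

lemma pool_union (X : Fin n → Finset (Fin k)) (v : ℕ → Fin k → F) (l : ℕ)
    (T T' : Finset (Fin n)) : pool X v l (T ∪ T') = pool X v l T ⊔ pool X v l T' :=
  Finset.sup_union

lemma Vset_zero (v : ℕ → Fin k → F) : Vset v 0 = ∅ := by
  unfold Vset
  have : {m : ℕ | m < 0} = ∅ := by ext m; simp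
  rw [this, Set.image_empty]

lemma Vset_succ (v : ℕ → Fin k → F) (l : ℕ) :
    Vset v (l + 1) = insert (v l) (Vset v l) := by
  unfold Vset
  have : {m : ℕ | m < l + 1} = insert l {m : ℕ | m < l} := by
    ext m; simp [Nat.lt_succ_iff_lt_or_eq]; omega
  rw [this, Set.image_insert_eq]

lemma know_succ (X : Fin n → Finset (Fin k)) (v : ℕ → Fin k → F) (l : ℕ) (j : Fin n) :
    know F X j (Vset v (l + 1)) = Submodule.span F {v l} ⊔ know F X j (Vset v l) := by
  unfold know
  rw [Vset_succ, Set.union_insert, Submodule.span_insert]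

lemma know_le_know_succ (X : Fin n → Finset (Fin k)) (v : ℕ → Fin k → F) (l : ℕ) (j : Fin n) :
    know F X j (Vset v l) ≤ know F X j (Vset v (l + 1)) := by
  rw [know_succ]; exact le_sup_right

lemma pool_le_pool_succ (X : Fin n → Finset (Fin k)) (v : ℕ → Fin k → F) (l : ℕ)
    (T : Finset (Fin n)) : pool X v l T ≤ pool X v (l + 1) T :=
  Finset.sup_mono_fun fun j _ => know_le_know_succ X v l j

lemma pool_succ (X : Fin n → Finset (Fin k)) (v : ℕ → Fin k → F) (l : ℕ)
    {T : Finset (Fin n)} (hT : T.Nonempty) :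
    pool X v (l + 1) T = Submodule.span F {v l} ⊔ pool X v l T := by
  obtain ⟨j₀, hj₀⟩ := hT
  refine le_antisymm (Finset.sup_le fun j hj => ?_) (sup_le ?_ (pool_le_pool_succ X v l T))
  · rw [know_succ]
    exact sup_le_sup_left (know_le_pool hj) _
  · refine le_trans ?_ (know_le_pool (l := l + 1) hj₀)
    rw [know_succ]; exact le_sup_left

lemma finrank_sup_le (A B : Submodule F (Fin k → F)) :
    Module.finrank F ↥(A ⊔ B) ≤ Module.finrank F A + Module.finrank F B := by
  have h := Submodule.finrank_sup_add_finrank_inf_eq A B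
  omega

lemma finrank_span_sup_of_notMem {x : Fin k → F} {W : Submodule F (Fin k → F)} (hx : x ∉ W) :
    Module.finrank F ↥(Submodule.span F {x} ⊔ W) = Module.finrank F W + 1 := by
  have hx0 : x ≠ 0 := fun h => hx (h ▸ W.zero_mem)
  have h1 : Module.finrank F ↥(Submodule.span F ({x} : Set (Fin k → F))) = 1 :=
    finrank_span_singleton hx0
  have hle := finrank_sup_le (Submodule.span F {x}) W
  have hxs : x ∈ Submodule.span F {x} ⊔ W :=
    Submodule.mem_sup_left (Submodule.mem_span_singleton_self x)
  have hlt : W < Submodule.span F {x} ⊔ W := by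
    refine lt_of_le_of_ne le_sup_right fun h => hx ?_
    rw [h]; exact hxs
  have := Submodule.finrank_lt_finrank_of_lt hlt
  omega

end AuxProof

section AuxProof2
open Finset

variable {F : Type*} [Field F] {n k : ℕ}

/-- Cut-set feasibility of a transmission-count vector `c` at greedy state `l`. -/
def Feas (X : Fin n → Finset (Fin k)) (S : Finset (Fin n)) (v : ℕ → Fin k → F)
    (l : ℕ) (c : Fin n → ℕ) : Prop :=
  (∀ j, c j ≠ 0 → j ∈ S) ∧
  ∀ T ⊆ S, T.Nonempty → k ≤ (∑ j ∈ S \ T, c j) + Module.finrank F (pool X v l T)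

lemma stdVecs_subset_know (X : Fin n → Finset (Fin k)) (j : Fin n) (V : Set (Fin k → F)) :
    stdVecs F (X j) ⊆ (know F X j V : Set (Fin k → F)) :=
  fun x hx => Submodule.subset_span (Or.inl hx)

lemma span_stdVecs_le_know (X : Fin n → Finset (Fin k)) (j : Fin n) (V : Set (Fin k → F)) :
    Submodule.span F (stdVecs F (X j)) ≤ know F X j V :=
  Submodule.span_le.2 (stdVecs_subset_know X j V)

open scoped Classical in
lemma feas_base
    (X : Fin n → Finset (Fin k)) (S : Finset (Fin n))
    (M : ℕ) (w : ℕ → Fin k → F) (σ : ℕ → Fin n)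
    (hσ : ∀ m < M, σ m ∈ S)
    (hw : ∀ m < M, w m ∈ Submodule.span F (stdVecs F (X (σ m))))
    (hScomplete : ∀ i ∈ S, dimKnow F X i (Vset w M) = k)
    (v : ℕ → Fin k → F) :
    ∃ c : Fin n → ℕ, Feas X S v 0 c ∧ ∑ j ∈ S, c j = M := by
  refine ⟨fun j => ((Finset.range M).filter fun m => σ m = j).card, ⟨?_, ?_⟩, ?_⟩
  · -- support
    intro j hj
    obtain ⟨m, hm⟩ := Finset.card_pos.mp (Nat.pos_of_ne_zero hj)
    obtain ⟨hm1, hm2⟩ := Finset.mem_filter.mp hm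
    exact hm2 ▸ hσ m (Finset.mem_range.mp hm1)
  · -- constraints
    intro T hTS hTne
    show k ≤ (∑ j' ∈ S \ T, ((Finset.range M).filter fun m => σ m = j').card) +
      Module.finrank F (pool X v 0 T)
    obtain ⟨j, hjT⟩ := hTne
    set G := (Finset.range M).filter (fun m => σ m ∉ T) with hG
    set B := Submodule.span F ((G.image w : Finset (Fin k → F)) : Set (Fin k → F)) with hB
    have htop : know F X j (Vset w M) = ⊤ := by
      apply Submodule.eq_top_of_finrank_eq
      have := hScomplete j (hTS hjT)
      unfold dimKnow at this
      rw [this]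
      simp [Module.finrank_pi]
    have hsub : know F X j (Vset w M) ≤ pool X v 0 T ⊔ B := by
      unfold know
      apply Submodule.span_le.2
      rintro x (hx | hx)
      · exact Submodule.mem_sup_left ((know_le_pool hjT) (stdVecs_subset_know X j (Vset v 0) hx))
      · obtain ⟨m, hm, rfl⟩ := hx
        have hmM : m < M := hm
        by_cases hmT : σ m ∈ T
        · refine Submodule.mem_sup_left ?_
          exact (le_trans (span_stdVecs_le_know X (σ m) (Vset v 0)) (know_le_pool hmT))
            (hw m hmM)
        · refine Submodule.mem_sup_right (Submodule.subset_span ?_)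
          simp only [Finset.coe_image, Set.mem_image]
          exact ⟨m, by simp [hG, Finset.mem_filter, Finset.mem_range, hmM, hmT], rfl⟩
    have hrank : k ≤ Module.finrank F ↥(pool X v 0 T ⊔ B) := by
      have h1 : Module.finrank F ↥(know F X j (Vset w M)) = k := by
        rw [htop]; simp [Module.finrank_pi]
      have := Submodule.finrank_mono hsub
      omega
    have hBle : Module.finrank F ↥B ≤ G.card := by
      have h1 : Module.finrank F ↥B ≤ (G.image w).card := by
        rw [hB]
        simpa [Set.finrank] using finrank_span_finset_le_card (R := F) (G.image w)
      have h2 := Finset.card_image_le (s := G) (f := w)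
      omega
    have hGcard : G.card = ∑ j' ∈ S \ T, ((Finset.range M).filter fun m => σ m = j').card := by
      rw [Finset.card_eq_sum_card_fiberwise (f := σ) (t := S \ T) ?_]
      · refine Finset.sum_congr rfl fun j' hj' => ?_
        have hj'T : j' ∉ T := (Finset.mem_sdiff.mp hj').2
        congr 1
        ext m
        simp only [hG, Finset.mem_filter, Finset.mem_range]
        constructor
        · rintro ⟨⟨h1, _⟩, h3⟩; exact ⟨h1, h3⟩
        · rintro ⟨h1, h2⟩; exact ⟨⟨h1, h2 ▸ hj'T⟩, h2⟩
      · intro m hm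
        obtain ⟨hm1, hm2⟩ := Finset.mem_filter.mp hm
        exact Finset.mem_sdiff.mpr ⟨hσ m (Finset.mem_range.mp hm1), hm2⟩
    have hsup := finrank_sup_le (pool X v 0 T) B
    omega
  · -- total
    show (∑ j ∈ S, ((Finset.range M).filter fun m => σ m = j).card) = M
    have := Finset.card_eq_sum_card_fiberwise (f := σ) (s := Finset.range M) (t := S)
      (fun m hm => hσ m (Finset.mem_range.mp hm))
    rw [Finset.card_range] at this
    exact this.symm

end AuxProof2

section AuxProof3
open Finset

variable {F : Type*} [Field F] {n k : ℕ}

open scoped Classical in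
lemma feas_step
    (X : Fin n → Finset (Fin k)) (S : Finset (Fin n)) (hS : ∀ x : Fin k, ∃ i ∈ S, x ∈ X i)
    (L : ℕ) (v : ℕ → Fin k → F) (t : ℕ → Fin n) (hg : IsGreedy F X L v t)
    (l : ℕ) (hl : l < L) (c : Fin n → ℕ) (hfeas : Feas X S v l c) (m : ℕ)
    (hsum : ∑ j ∈ S, c j = m + 1) :
    ∃ c' : Fin n → ℕ, Feas X S v (l + 1) c' ∧ ∑ j ∈ S, c' j = m := by
  obtain ⟨hsupp, hcon⟩ := hfeas
  obtain ⟨-, hmax, hvm, hvn⟩ := hg.1 l hl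
  unfold dimKnow at hmax
  set R := Rset F X v t l with hR
  set K := know F X (t l) (Vset v l) with hK
  set d := Module.finrank F K with hd
  -- users outside `R` have knowledge exactly `K`
  have hKle : ∀ j, j ∉ R → K ≤ know F X j (Vset v l) := by
    intro j hj
    have hst : stdVecs F (X (t l)) ⊆ (know F X j (Vset v l) : Set (Fin k → F)) := by
      by_contra h
      exact hj (Finset.mem_filter.2 ⟨Finset.mem_univ j, h⟩)
    rw [hK]
    unfold know
    apply Submodule.span_le.2
    rintro x (hx | hx)
    · exact hst hx
    · exact Submodule.subset_span (Or.inr hx)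
  have hnotR : ∀ j, j ∉ R → know F X j (Vset v l) = K := by
    intro j hj
    exact (Submodule.eq_of_le_of_finrank_le (hKle j hj) (hmax j)).symm
  have hvK : v l ∈ K := by
    rw [hK]
    exact Submodule.span_mono Set.subset_union_left hvm
  -- some user of `S` is outside `R`
  set TopS := S.filter (fun j => j ∉ R) with hTopS
  have hTopSne : TopS.Nonempty := by
    by_contra hne
    rw [Finset.not_nonempty_iff_eq_empty] at hne
    have hSR : ∀ j ∈ S, j ∈ R := by
      intro j hj
      by_contra hjR
      have : j ∈ TopS := Finset.mem_filter.2 ⟨hj, hjR⟩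
      simp [hne] at this
    apply hvn
    have : Submodule.span F ((⋃ i ∈ R, stdVecs F (X i)) ∪ Vset v l) = ⊤ := by
      apply span_eq_top_of_single_mem
      intro x
      obtain ⟨i, hiS, hix⟩ := hS x
      refine Or.inl ?_
      refine Set.mem_biUnion (hSR i hiS) ?_
      exact ⟨x, by simpa using hix, rfl⟩
    rw [this]
    trivial
  have hdim_le : ∀ j, Module.finrank F (know F X j (Vset v l)) ≤ d := hmax
  -- tightness
  set Tight : Finset (Fin n) → Prop :=
    fun T => T ⊆ S ∧ T.Nonempty ∧
      (∑ j ∈ S \ T, c j) + Module.finrank F (pool X v l T) = k with hTight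
  -- inserting a top user into a tight set containing a top user forces count 0
  have htight_insert : ∀ T, Tight T → (∃ j₂ ∈ T, j₂ ∉ R) →
      ∀ j ∈ S, j ∉ R → j ∉ T → c j = 0 := by
    rintro T ⟨hTS, hTne, hTeq⟩ ⟨j₂, hj₂T, hj₂R⟩ j hjS hjR hjT
    have hpool : pool X v l (insert j T) = pool X v l T := by
      unfold pool
      rw [Finset.sup_insert]
      refine sup_eq_right.2 ?_
      rw [hnotR j hjR, ← hnotR j₂ hj₂R]
      exact know_le_pool hj₂T
    have hjSD : j ∈ S \ T := Finset.mem_sdiff.2 ⟨hjS, hjT⟩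
    have hsdiff : S \ insert j T = (S \ T).erase j := Finset.sdiff_insert S T j
    have hsum1 : c j + ∑ j' ∈ (S \ T).erase j, c j' = ∑ j' ∈ S \ T, c j' :=
      Finset.add_sum_erase _ c hjSD
    have hcon' := hcon (insert j T) (Finset.insert_subset hjS hTS)
      (Finset.insert_nonempty j T)
    rw [hpool, hsdiff] at hcon'
    omega
  -- choose the element whose count we decrement
  have hpos : ∃ j₀ ∈ S, 1 ≤ c j₀ := by
    by_contra h
    push_neg at h
    have : ∑ j ∈ S, c j = 0 := Finset.sum_eq_zero fun j hj => by
      have := h j hj; omega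
    omega
  have hchoice : ∃ j₀ ∈ S, 1 ≤ c j₀ ∧
      ∀ T, Tight T → ∀ j₂ ∈ T, j₂ ∉ R → j₀ ∈ T := by
    by_cases hi : ∃ j ∈ S, j ∉ R ∧ 1 ≤ c j
    · obtain ⟨j₀, hj₀S, hj₀R, hj₀c⟩ := hi
      refine ⟨j₀, hj₀S, hj₀c, ?_⟩
      intro T hT j₂ hj₂T hj₂R
      by_contra hj₀T
      have := htight_insert T hT ⟨j₂, hj₂T, hj₂R⟩ j₀ hj₀S hj₀R hj₀T
      omega
    · push_neg at hi
      have hzero : ∀ j ∈ S, j ∉ R → c j = 0 := by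
        intro j hj hjR
        have := hi j hj hjR
        omega
      by_cases hT : ∃ T, Tight T ∧ ∃ j₂ ∈ T, j₂ ∉ R
      · -- union with TopS stays tight
        have hUnion : ∀ T, Tight T → (∃ j₂ ∈ T, j₂ ∉ R) → Tight (T ∪ TopS) := by
          rintro T ⟨hTS, hTne, hTeq⟩ ⟨j₂, hj₂T, hj₂R⟩
          have hTopLe : pool X v l TopS ≤ pool X v l T := by
            refine Finset.sup_le fun j hj => ?_
            rw [hnotR j (Finset.mem_filter.1 hj).2, ← hnotR j₂ hj₂R]
            exact know_le_pool hj₂T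
          have hpool : pool X v l (T ∪ TopS) = pool X v l T := by
            rw [pool_union]
            exact sup_eq_left.2 hTopLe
          have hsums : ∑ j ∈ S \ (T ∪ TopS), c j = ∑ j ∈ S \ T, c j := by
            refine Finset.sum_subset ?_ ?_
            · exact Finset.sdiff_subset_sdiff (le_refl S) Finset.subset_union_left
            · intro j hj hj2
              obtain ⟨hjS, hjT⟩ := Finset.mem_sdiff.1 hj
              have hjTop : j ∈ TopS := by
                by_contra hjTop
                exact hj2 (Finset.mem_sdiff.2 ⟨hjS, fun hmem =>
                  (Finset.mem_union.1 hmem).elim hjT hjTop⟩)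
              exact hzero j hjS (Finset.mem_filter.1 hjTop).2
          have hsubS : T ∪ TopS ⊆ S := Finset.union_subset hTS (Finset.filter_subset _ S)
          have hconU := hcon (T ∪ TopS) hsubS (hTne.mono Finset.subset_union_left)
          refine ⟨hsubS, hTne.mono Finset.subset_union_left, ?_⟩
          rw [hpool, hsums]
          omega
        obtain ⟨T₀, hT₀, hT₀R⟩ := hT
        set P := S.powerset.filter (fun T => Tight T ∧ TopS ⊆ T) with hP
        have hPmem : ∀ T, T ∈ P ↔ Tight T ∧ TopS ⊆ T := by
          intro T
          simp only [hP, Finset.mem_filter, Finset.mem_powerset]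
          exact ⟨fun h => h.2, fun h => ⟨h.1.1, h⟩⟩
        have hT₀P : T₀ ∪ TopS ∈ P := by
          rw [hPmem]
          exact ⟨hUnion T₀ hT₀ hT₀R, Finset.subset_union_right⟩
        obtain ⟨Tm, hTmP, hTmmin⟩ := Finset.exists_min_image P Finset.card ⟨_, hT₀P⟩
        obtain ⟨hTmT, hTmTop⟩ := (hPmem Tm).1 hTmP
        -- uncrossing
        have huncross : ∀ T1, (Tight T1 ∧ TopS ⊆ T1) → ∀ T2, (Tight T2 ∧ TopS ⊆ T2) →
            Tight (T1 ∩ T2) := by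
          rintro T1 ⟨⟨h1S, h1ne, h1eq⟩, h1Top⟩ T2 ⟨⟨h2S, h2ne, h2eq⟩, h2Top⟩
          have hine : (T1 ∩ T2).Nonempty :=
            hTopSne.mono (Finset.subset_inter h1Top h2Top)
          have hisub : T1 ∩ T2 ⊆ S := fun a ha => h1S (Finset.mem_inter.1 ha).1
          have hcon1 := hcon (T1 ∩ T2) hisub hine
          have hcon2 := hcon (T1 ∪ T2) (Finset.union_subset h1S h2S)
            (h1ne.mono Finset.subset_union_left)
          have e1 : S \ (T1 ∩ T2) = (S \ T1) ∪ (S \ T2) := by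
            ext a
            simp only [Finset.mem_sdiff, Finset.mem_union, Finset.mem_inter]
            tauto
          have e2 : S \ (T1 ∪ T2) = (S \ T1) ∩ (S \ T2) := by
            ext a
            simp only [Finset.mem_sdiff, Finset.mem_union, Finset.mem_inter]
            tauto
          have hsums : (∑ j ∈ S \ (T1 ∩ T2), c j) + (∑ j ∈ S \ (T1 ∪ T2), c j) =
              (∑ j ∈ S \ T1, c j) + (∑ j ∈ S \ T2, c j) := by
            rw [e1, e2]
            exact Finset.sum_union_inter
          have hpu : pool X v l (T1 ∪ T2) = pool X v l T1 ⊔ pool X v l T2 :=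
            pool_union X v l T1 T2
          have hpi : pool X v l (T1 ∩ T2) ≤ pool X v l T1 ⊓ pool X v l T2 :=
            le_inf (pool_mono Finset.inter_subset_left) (pool_mono Finset.inter_subset_right)
          have h3 := Submodule.finrank_sup_add_finrank_inf_eq (pool X v l T1) (pool X v l T2)
          have h4 : Module.finrank F (pool X v l (T1 ∩ T2)) ≤
              Module.finrank F ↥(pool X v l T1 ⊓ pool X v l T2) := Submodule.finrank_mono hpi
          have h5 : Module.finrank F (pool X v l (T1 ∪ T2)) =
              Module.finrank F ↥(pool X v l T1 ⊔ pool X v l T2) := by rw [hpu]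
          exact ⟨hisub, hine, by omega⟩
        -- Tm is contained in every member of P
        have hTmsub : ∀ T ∈ P, Tm ⊆ T := by
          intro T hTP
          have hint : Tight (Tm ∩ T) := huncross Tm ((hPmem Tm).1 hTmP) T ((hPmem T).1 hTP)
          have hintP : Tm ∩ T ∈ P := by
            rw [hPmem]
            exact ⟨hint, Finset.subset_inter hTmTop ((hPmem T).1 hTP).2⟩
          have hcard := hTmmin _ hintP
          have heq : Tm ∩ T = Tm :=
            Finset.eq_of_subset_of_card_le Finset.inter_subset_left hcard
          intro a ha
          rw [← heq] at ha
          exact (Finset.mem_inter.1 ha).2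
        by_cases hcm : ∃ j₀ ∈ Tm, 1 ≤ c j₀
        · obtain ⟨j₀, hj₀Tm, hj₀c⟩ := hcm
          refine ⟨j₀, hTmT.1 hj₀Tm, hj₀c, ?_⟩
          intro T hT' j₂ hj₂T hj₂R
          have hTP : T ∪ TopS ∈ P := by
            rw [hPmem]
            exact ⟨hUnion T hT' ⟨j₂, hj₂T, hj₂R⟩, Finset.subset_union_right⟩
          have hj₀U : j₀ ∈ T ∪ TopS := hTmsub _ hTP hj₀Tm
          rcases Finset.mem_union.1 hj₀U with h | h
          · exact h
          · obtain ⟨hj₀S, hj₀R⟩ := Finset.mem_filter.1 h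
            have := hzero j₀ hj₀S hj₀R
            omega
        · -- c vanishes on all of Tm : contradiction
          exfalso
          push_neg at hcm
          have hc0 : ∀ j ∈ Tm, c j = 0 := fun j hj => by have := hcm j hj; omega
          obtain ⟨hTmS, hTmne, hTmeq⟩ := hTmT
          have hsum0 : ∑ j ∈ S \ Tm, c j = m + 1 := by
            rw [← hsum]
            refine Finset.sum_subset (Finset.sdiff_subset) ?_
            intro j hjS hjD
            have hjTm : j ∈ Tm := by
              by_contra hjTm
              exact hjD (Finset.mem_sdiff.2 ⟨hjS, hjTm⟩)
            exact hc0 j hjTm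
          set D := Module.finrank F (pool X v l Tm) with hD
          -- k = (m+1) + D
          have hkeq : (m + 1) + D = k := by rw [← hsum0]; exact hTmeq
          -- a top user j₁
          obtain ⟨j₁, hj₁⟩ := hTopSne
          obtain ⟨hj₁S, hj₁R⟩ := Finset.mem_filter.1 hj₁
          have hKpool : K ≤ pool X v l Tm := by
            rw [← hnotR j₁ hj₁R]
            exact know_le_pool (hTmTop hj₁)
          have hdD : d ≤ D := Submodule.finrank_mono hKpool
          -- singleton constraint at j₁
          have hsing := hcon {j₁} (Finset.singleton_subset_iff.2 hj₁S)
            (Finset.singleton_nonempty j₁)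
          rw [pool_singleton, hnotR j₁ hj₁R] at hsing
          have hsumj₁ : ∑ j ∈ S \ {j₁}, c j = m + 1 := by
            rw [← hsum]
            refine Finset.sum_subset (Finset.sdiff_subset) ?_
            intro j hjS hjD
            have : j = j₁ := by
              by_contra hne
              exact hjD (Finset.mem_sdiff.2 ⟨hjS, by simp [hne]⟩)
            exact this ▸ hzero j₁ hj₁S hj₁R
          rw [hsumj₁] at hsing
          -- get a positive user outside Tm
          have hj₃ : ∃ j₃ ∈ S \ Tm, 1 ≤ c j₃ := by
            by_contra h
            push_neg at h
            have : ∑ j ∈ S \ Tm, c j = 0 :=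
              Finset.sum_eq_zero fun j hj => by have := h j hj; omega
            omega
          obtain ⟨j₃, hj₃SD, hj₃c⟩ := hj₃
          have hj₃S : j₃ ∈ S := (Finset.mem_sdiff.1 hj₃SD).1
          have hsing3 := hcon {j₃} (Finset.singleton_subset_iff.2 hj₃S)
            (Finset.singleton_nonempty j₃)
          rw [pool_singleton] at hsing3
          have hsumj₃ : c j₃ + ∑ j ∈ S \ {j₃}, c j = m + 1 := by
            rw [← hsum, Finset.sdiff_singleton_eq_erase]
            exact Finset.add_sum_erase _ c hj₃S
          have hd3 := hdim_le j₃
          omega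
      · -- no tight set meets the complement of R
        obtain ⟨j₀, hj₀S, hj₀c⟩ := hpos
        refine ⟨j₀, hj₀S, hj₀c, ?_⟩
        intro T hT' j₂ hj₂T hj₂R
        exact absurd ⟨T, hT', j₂, hj₂T, hj₂R⟩ hT
  -- now build the new count vector
  obtain ⟨j₀, hj₀S, hj₀c, hj₀tight⟩ := hchoice
  set c' : Fin n → ℕ := Function.update c j₀ (c j₀ - 1) with hc'
  have hupd : ∀ A : Finset (Fin n), j₀ ∉ A → ∑ j ∈ A, c' j = ∑ j ∈ A, c j := by
    intro A hA
    refine Finset.sum_congr rfl fun j hj => ?_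
    rw [hc']
    exact Function.update_of_ne (fun h => hA (by rw [← h]; exact hj)) _ _
  have hupd2 : ∀ A : Finset (Fin n), j₀ ∈ A → (∑ j ∈ A, c' j) + 1 = ∑ j ∈ A, c j := by
    intro A hA
    rw [hc', Finset.sum_update_of_mem hA, Finset.sdiff_singleton_eq_erase,
      ← Finset.add_sum_erase _ c hA]
    omega
  refine ⟨c', ⟨?_, ?_⟩, ?_⟩
  · intro j hj
    by_cases h : j = j₀
    · exact h ▸ hj₀S
    · refine hsupp j ?_
      rwa [hc', Function.update_of_ne h] at hj
  · intro T hTS hTne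
    by_cases hj₀T : j₀ ∈ T
    · have hj₀SD : j₀ ∉ S \ T := fun h => (Finset.mem_sdiff.1 h).2 hj₀T
      rw [hupd _ hj₀SD]
      have h1 := hcon T hTS hTne
      have h2 : Module.finrank F (pool X v l T) ≤ Module.finrank F (pool X v (l + 1) T) :=
        Submodule.finrank_mono (pool_le_pool_succ X v l T)
      omega
    · have hj₀SD : j₀ ∈ S \ T := Finset.mem_sdiff.2 ⟨hj₀S, hj₀T⟩
      have hs' := hupd2 _ hj₀SD
      by_cases hTR : ∃ j₂ ∈ T, j₂ ∉ R
      · obtain ⟨j₂, hj₂T, hj₂R⟩ := hTR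
        have hvmem : v l ∈ pool X v l T := by
          refine (know_le_pool hj₂T) ?_
          rw [hnotR j₂ hj₂R]
          exact hvK
        have hpe : pool X v (l + 1) T = pool X v l T := by
          rw [pool_succ X v l hTne]
          refine sup_eq_right.2 (Submodule.span_le.2 ?_)
          intro x hx
          rw [Set.mem_singleton_iff.1 hx]
          exact hvmem
        have hnt : (∑ j ∈ S \ T, c j) + Module.finrank F (pool X v l T) ≠ k := by
          intro h
          exact hj₀T (hj₀tight T ⟨hTS, hTne, h⟩ j₂ hj₂T hj₂R)
        have h1 := hcon T hTS hTne
        rw [hpe]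
        omega
      · push_neg at hTR
        have hpool_le : pool X v l T ≤
            Submodule.span F ((⋃ i ∈ R, stdVecs F (X i)) ∪ Vset v l) := by
          refine Finset.sup_le fun j hj => ?_
          unfold know
          refine Submodule.span_mono ?_
          exact Set.union_subset_union_left _ (Set.subset_iUnion₂ (s := fun i' (_ : i' ∈ R) => stdVecs F (X i')) j (hTR j hj))
        have hvnot : v l ∉ pool X v l T := fun hmem => hvn (hpool_le hmem)
        have hfr : Module.finrank F (pool X v (l + 1) T) =
            Module.finrank F (pool X v l T) + 1 := by
          rw [pool_succ X v l hTne]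
          exact finrank_span_sup_of_notMem hvnot
        have h1 := hcon T hTS hTne
        omega
  · have := hupd2 S hj₀S
    omega

end AuxProof3


end

/-- For every greedy transmission sequence, every coalition `S`, and every
`S`-omniscience-achieving transmission scheme of length `M` (transmitters in `S`, each
transmission in its transmitter's span, making all of `S` complete), the round `l_S` at which
all users in `S` become complete under the greedy sequence satisfies `l_S ≤ M`. -/
theorem greedy_completes_coalition_within_min_scheme_length
    {F : Type*} [Field F] [Fintype F] (n k : ℕ) (hn : 0 < n) (hk : 0 < k)
    (X : Fin n → Finset (Fin k)) (hcov : ∀ x : Fin k, ∃ i, x ∈ X i)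
    (L : ℕ) (v : ℕ → Fin k → F) (t : ℕ → Fin n) (hg : IsGreedy F X L v t)
    (S : Finset (Fin n)) (hS : ∀ x : Fin k, ∃ i ∈ S, x ∈ X i)
    (M : ℕ) (w : ℕ → Fin k → F) (σ : ℕ → Fin n)
    (hσ : ∀ m < M, σ m ∈ S)
    (hw : ∀ m < M, w m ∈ Submodule.span F (stdVecs F (X (σ m))))
    (hScomplete : ∀ i ∈ S, dimKnow F X i (Vset w M) = k)
    (lS : ℕ) (hlS : IsLeast {l : ℕ | ∀ i ∈ S, dimKnow F X i (Vset v l) = k} lS) :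
    lS ≤ M := by
  classical
  obtain ⟨c₀, hc₀, hc₀sum⟩ := feas_base X S M w σ hσ hw hScomplete v
  suffices h : ∀ m l c, Feas X S v l c → ∑ j ∈ S, c j = m → lS ≤ l + m by
    simpa using h M 0 c₀ hc₀ hc₀sum
  intro m
  induction m with
  | zero =>
    intro l c hfeas hsum
    have hc0 : ∀ j, c j = 0 := by
      intro j
      by_cases hj : j ∈ S
      · exact (Finset.sum_eq_zero_iff).1 hsum j hj
      · by_contra h; exact hj (hfeas.1 j h)
    have hmem : ∀ i ∈ S, dimKnow F X i (Vset v l) = k := by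
      intro i hi
      have h1 := hfeas.2 {i} (Finset.singleton_subset_iff.2 hi) (Finset.singleton_nonempty i)
      rw [pool_singleton] at h1
      have h0 : ∑ j ∈ S \ {i}, c j = 0 := Finset.sum_eq_zero fun j _ => hc0 j
      have hle := dim_le_k (know F X i (Vset v l))
      unfold dimKnow
      omega
    have := hlS.2 hmem
    omega
  | succ m ih =>
    intro l c hfeas hsum
    by_cases hlL : l < L
    · obtain ⟨c', hfeas', hsum'⟩ := feas_step X S hS L v t hg l hlL c hfeas m hsum
      have := ih (l + 1) c' hfeas' hsum'
      omega
    · have hcompL : ∀ i ∈ S, dimKnow F X i (Vset v L) = k := fun i _ => hg.2 i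
      have := hlS.2 hcompL
      omega
end

section
/- Let E be a finite-dimensional vector space over a finite field 𝔽_q, let U be a subspace of E, and let W_1,…,W_m be subspaces of E such that U ⊄ W_j for every j ∈ {1,…,m}. If q ≥ m, then there exists a vector v ∈ U with v ∉ W_j for all j ∈ {1,…,m}. -/
/-- Let `E` be a finite-dimensional vector space over the finite field `𝔽_q`,
`U` a subspace, and `W_1, …, W_m` subspaces with `U ⊄ W_j` for every `j`. If `q ≥ m`, then
there is a vector `v ∈ U` with `v ∉ W_j` for all `j` (existence of a valid encoding vector). -/
theorem exists_vector_avoiding_subspaces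
    {F E : Type*} [Field F] [Fintype F] [AddCommGroup E] [Module F E] [FiniteDimensional F E]
    (U : Submodule F E) (m : ℕ) (W : Fin m → Submodule F E)
    (hW : ∀ j : Fin m, ¬ U ≤ W j) (hq : m ≤ Fintype.card F) :
    ∃ v ∈ U, ∀ j : Fin m, v ∉ W j := by
  classical
  induction m with
  | zero => exact ⟨0, U.zero_mem, fun j => j.elim0⟩
  | succ m ih =>
    obtain ⟨v, hvU, hv⟩ := ih (fun j => W j.castSucc) (fun j => hW j.castSucc)
      (le_trans (Nat.le_succ m) hq)
    by_cases hvm : v ∈ W (Fin.last m)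
    · obtain ⟨u, huU, hum⟩ := SetLike.not_le_iff_exists.mp (hW (Fin.last m))
      set T : Finset F :=
        Finset.univ.filter (fun t => ∃ j : Fin m, u + t • v ∈ W j.castSucc) with hT
      have hTcard : T.card ≤ m := by
        have hsub : T ⊆ Finset.univ.biUnion
            (fun j : Fin m => Finset.univ.filter (fun t => u + t • v ∈ W j.castSucc)) := by
          intro t ht
          rw [hT, Finset.mem_filter] at ht
          obtain ⟨j, hj⟩ := ht.2
          exact Finset.mem_biUnion.mpr ⟨j, Finset.mem_univ j,
            Finset.mem_filter.mpr ⟨Finset.mem_univ t, hj⟩⟩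
        calc T.card ≤ _ := Finset.card_le_card hsub
          _ ≤ ∑ j : Fin m, (Finset.univ.filter
              (fun t => u + t • v ∈ W j.castSucc)).card := Finset.card_biUnion_le
          _ ≤ ∑ _j : Fin m, 1 := by
            refine Finset.sum_le_sum fun j _ => Finset.card_le_one.mpr ?_
            intro t1 ht1 t2 ht2
            rw [Finset.mem_filter] at ht1 ht2
            by_contra hne
            have hd : (t1 - t2) • v ∈ W j.castSucc := by
              have := (W j.castSucc).sub_mem ht1.2 ht2.2
              simpa [sub_smul] using this
            have : v ∈ W j.castSucc := by
              have := (W j.castSucc).smul_mem (t1 - t2)⁻¹ hd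
              rwa [inv_smul_smul₀ (sub_ne_zero.mpr hne)] at this
            exact hv j this
          _ = m := by simp
      have : ∃ t : F, t ∉ T := by
        by_contra h
        push_neg at h
        have : (Finset.univ : Finset F) ⊆ T := fun t _ => h t
        have := Finset.card_le_card this
        simp only [Finset.card_univ] at this
        omega
      obtain ⟨t, ht⟩ := this
      refine ⟨u + t • v, U.add_mem huU (U.smul_mem t hvU), fun j => ?_⟩
      refine Fin.lastCases ?_ ?_ j
      · intro hmem
        have := (W (Fin.last m)).sub_mem hmem ((W (Fin.last m)).smul_mem t hvm)
        exact hum (by simpa using this)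
      · intro i hmem
        exact ht (by rw [hT, Finset.mem_filter]; exact ⟨Finset.mem_univ t, ⟨i, hmem⟩⟩)
    · exact ⟨v, hvU, fun j => Fin.lastCases hvm hv j⟩
end

section
/- Let n ≥ 2 and k ≥ 1 be integers, a_1,…,a_n ∈ {0,…,k}, and L ∈ ℕ with L ≤ ∑_{i=1}^n (k − a_i). Define real-valued payments by p_i(0) = 0 and, for l = 1,…,L, P_l = {i : a_i + p_i(l−1) = min_{j} (a_j + p_j(l−1))} and p_i(l) = p_i(l−1) + 1/|P_l| if i ∈ P_l, p_i(l) = p_i(l−1) otherwise. Then p_i(L) ≤ k − a_i for every i ∈ {1,…,n}. -/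
open scoped Classical

/-- The water-filling payment process of Algorithm 2. Starting from zero
payments, in each of `L` rounds one unit of payment is split equally among the users `i`
minimizing `a_i + p_i` (where `a_i = |X_i| ≤ k`). If `L ≤ ∑_i (k − a_i)`, then at the end
every user `i` has paid at most `k − a_i`. -/
theorem waterfilling_payment_le
    (n k : ℕ) (hn : 2 ≤ n) (hk : 1 ≤ k)
    (a : Fin n → ℕ) (ha : ∀ i, a i ≤ k)
    (L : ℕ) (hL : L ≤ ∑ i, (k - a i))
    (p : ℕ → Fin n → ℝ) (h0 : ∀ i, p 0 i = 0)
    (hstep : ∀ l < L, ∀ i : Fin n,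
      p (l + 1) i =
        if i ∈ Finset.univ.filter (fun i' : Fin n =>
            ∀ j : Fin n, (a i' : ℝ) + p l i' ≤ (a j : ℝ) + p l j) then
          p l i + 1 / ((Finset.univ.filter (fun i' : Fin n =>
            ∀ j : Fin n, (a i' : ℝ) + p l i' ≤ (a j : ℝ) + p l j)).card : ℝ)
        else p l i) :
    ∀ i : Fin n, p L i ≤ (k : ℝ) - (a i : ℝ) := by
  have hne : (Finset.univ : Finset (Fin n)).Nonempty := ⟨⟨0, by omega⟩, Finset.mem_univ _⟩
  obtain ⟨i0, -, hi0⟩ := Finset.exists_min_image Finset.univ a hne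
  -- invariant
  have key : ∀ l ≤ L, ∃ w : ℝ, (a i0 : ℝ) ≤ w ∧ (∀ j, p l j = max (w - a j) 0) ∧
      (∑ j, max (w - (a j : ℝ)) 0) = l := by
    intro l
    induction l with
    | zero =>
      intro _
      refine ⟨a i0, le_refl _, fun j => ?_, ?_⟩
      · rw [h0, max_eq_right]
        have : (a i0 : ℝ) ≤ a j := by exact_mod_cast hi0 j (Finset.mem_univ j)
        linarith
      · rw [Finset.sum_eq_zero]
        · simp
        intro j _
        rw [max_eq_right]
        have : (a i0 : ℝ) ≤ a j := by exact_mod_cast hi0 j (Finset.mem_univ j)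
        linarith
    | succ l ih =>
      intro hl
      obtain ⟨w, hw0, hw1, hw2⟩ := ih (by omega)
      set Q : Finset (Fin n) := Finset.univ.filter (fun j : Fin n => (a j : ℝ) ≤ w) with hQdef
      have hi0Q : i0 ∈ Q := by simp [hQdef, hw0]
      have hcpos : 0 < Q.card := Finset.card_pos.2 ⟨i0, hi0Q⟩
      have hc : (0 : ℝ) < (Q.card : ℝ) := by exact_mod_cast hcpos
      -- the value of user j
      have hv : ∀ j, (a j : ℝ) + p l j = max w (a j) := by
        intro j
        rw [hw1]
        rcases le_total ((a j : ℝ)) w with h | h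
        · rw [max_eq_left (by linarith : (0:ℝ) ≤ w - a j), max_eq_left h]; ring
        · rw [max_eq_right (by linarith : w - (a j:ℝ) ≤ 0), max_eq_right h]; ring
      -- the argmin set is Q
      have hPQ : (Finset.univ.filter (fun i' : Fin n =>
          ∀ j : Fin n, (a i' : ℝ) + p l i' ≤ (a j : ℝ) + p l j)) = Q := by
        ext i
        simp only [Finset.mem_filter, Finset.mem_univ, true_and, hQdef]
        constructor
        · intro h
          have h2 := h i0
          rw [hv, hv, max_eq_left hw0] at h2
          exact le_trans (le_max_right w ((a i : ℝ))) h2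
        · intro h j
          rw [hv, hv, max_eq_left h]
          exact le_max_left _ _
      -- sum over Q
      have hsum : ∑ j ∈ Q, (w - (a j : ℝ)) = l := by
        rw [← hw2, Finset.sum_filter]
        apply Finset.sum_congr rfl
        intro j _
        split_ifs with h
        · exact (max_eq_left (by linarith)).symm
        · exact (max_eq_right (by push_neg at h; linarith)).symm
      have hcw : (Q.card : ℝ) * w = l + (∑ j ∈ Q, (a j : ℕ) : ℕ) := by
        have := hsum
        rw [Finset.sum_sub_distrib, Finset.sum_const, nsmul_eq_mul] at this
        push_cast
        push_cast at this
        linarith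
      -- no overshoot: users outside Q are at least 1/card above w
      have hout : ∀ j : Fin n, j ∉ Q → w + 1 / (Q.card : ℝ) ≤ a j := by
        intro j hj
        have hwj : w < (a j : ℝ) := by
          simp only [hQdef, Finset.mem_filter, Finset.mem_univ, true_and] at hj
          linarith [lt_of_not_ge hj]
        have h1 : ((l + (∑ j ∈ Q, (a j : ℕ)) : ℕ) : ℝ) < ((Q.card * a j : ℕ) : ℝ) := by
          push_cast
          calc (l : ℝ) + (∑ j ∈ Q, ((a j : ℕ) : ℝ)) = (Q.card : ℝ) * w := by
                rw [hcw]; push_cast; ring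
            _ < (Q.card : ℝ) * a j := by
                exact mul_lt_mul_of_pos_left hwj hc
        have h2 : l + (∑ j ∈ Q, (a j : ℕ)) + 1 ≤ Q.card * a j := by
          exact_mod_cast h1
        have h3 : (Q.card : ℝ) * w + 1 ≤ (Q.card : ℝ) * a j := by
          rw [hcw]
          exact_mod_cast h2
        rw [← mul_le_mul_iff_right₀ hc, mul_add, mul_one_div, div_self (ne_of_gt hc)]
        linarith
      have hfrac : (0:ℝ) < 1 / (Q.card : ℝ) := by positivity
      refine ⟨w + 1 / (Q.card : ℝ), by linarith, ?_, ?_⟩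
      · intro j
        rw [hstep l (by omega) j, hPQ]
        by_cases hj : j ∈ Q
        · have haj : (a j : ℝ) ≤ w := by
            simpa [hQdef] using hj
          rw [if_pos hj, hw1, max_eq_left (by linarith : (0:ℝ) ≤ w - a j),
            max_eq_left (by linarith : (0:ℝ) ≤ w + 1 / (Q.card : ℝ) - a j)]
          ring
        · have haj := hout j hj
          have hwj : w < (a j : ℝ) := by
            simp only [hQdef, Finset.mem_filter, Finset.mem_univ, true_and] at hj
            linarith [lt_of_not_ge hj]
          rw [if_neg hj, hw1, max_eq_right (by linarith : w - (a j:ℝ) ≤ 0),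
            max_eq_right (by linarith : w + 1 / (Q.card : ℝ) - (a j:ℝ) ≤ 0)]
      · have hterm : ∀ j : Fin n, max (w + 1 / (Q.card : ℝ) - (a j:ℝ)) 0 =
            if (a j : ℝ) ≤ w then (w - a j) + 1 / (Q.card : ℝ) else 0 := by
          intro j
          split_ifs with h
          · rw [max_eq_left (by linarith)]
            ring
          · push_neg at h
            have hj : j ∉ Q := by simp [hQdef]; linarith
            have := hout j hj
            rw [max_eq_right (by linarith)]
        rw [Finset.sum_congr rfl (fun j _ => hterm j), ← Finset.sum_filter, ← hQdef,
          Finset.sum_add_distrib, hsum, Finset.sum_const, nsmul_eq_mul, mul_one_div,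
          div_self (ne_of_gt hc)]
        push_cast
        ring
  -- conclude
  obtain ⟨w, hw0, hw1, hw2⟩ := key L le_rfl
  have hub : (L : ℝ) ≤ ∑ i, ((k : ℝ) - a i) := by
    calc (L : ℝ) ≤ ((∑ i, (k - a i) : ℕ) : ℝ) := by exact_mod_cast hL
      _ = ∑ i, ((k : ℝ) - a i) := by
          rw [Nat.cast_sum]
          exact Finset.sum_congr rfl fun i _ => by rw [Nat.cast_sub (ha i)]
  have hwk : w ≤ (k : ℝ) := by
    by_contra h
    push_neg at h
    have hlt : ∑ i, ((k : ℝ) - a i) < ∑ i : Fin n, (w - (a i : ℝ)) :=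
      Finset.sum_lt_sum_of_nonempty hne (fun i _ => by linarith)
    have hle : ∑ i : Fin n, (w - (a i : ℝ)) ≤ ∑ i, max (w - (a i : ℝ)) 0 :=
      Finset.sum_le_sum fun i _ => le_max_left _ _
    linarith [hw2]
  intro i
  rw [hw1 i]
  have h1 : w - (a i : ℝ) ≤ (k : ℝ) - a i := by linarith
  have h2 : (0 : ℝ) ≤ (k : ℝ) - a i := by
    have : (a i : ℝ) ≤ k := by exact_mod_cast ha i
    linarith
  exact max_le h1 h2
end

section
/- Let S ⊆ N be a coalition, and let w_1,…,w_M ∈ 𝔽_q^k with a map σ : {1,…,M} → S such that w_m ∈ span(U_{σ(m)}) for every m and dim span(U_i ∪ {w_1,…,w_M}) = k for every i ∈ S. Then for every nonempty proper subset S̃ ⊊ S, the number of transmissions made by users in S̃ satisfies |{m : σ(m) ∈ S̃}| ≥ |⋂_{j∈S∖S̃} X̄_j|. -/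
/-- If a scheme `w_1, …, w_M` with transmitters `σ(m) ∈ S` (a coalition), each
`w_m` in its transmitter's span, makes every user of `S` complete, then for every nonempty
proper subset `S̃ ⊊ S`, the number of transmissions made by users of `S̃` is at least
`|⋂_{j ∈ S∖S̃} X̄_j|` (the cut-set bound). -/
theorem cutset_necessity
    {F : Type*} [Field F] [Fintype F] (n k : ℕ) (hn : 0 < n) (hk : 0 < k)
    (X : Fin n → Finset (Fin k)) (hcov : ∀ x : Fin k, ∃ i, x ∈ X i)
    (S : Finset (Fin n)) (hS : ∀ x : Fin k, ∃ i ∈ S, x ∈ X i)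
    (M : ℕ) (w : ℕ → Fin k → F) (σ : ℕ → Fin n)
    (hσ : ∀ m < M, σ m ∈ S)
    (hw : ∀ m < M, w m ∈ Submodule.span F (stdVecs F (X (σ m))))
    (hScomplete : ∀ i ∈ S, dimKnow F X i (Vset w M) = k)
    (T : Finset (Fin n)) (hTne : T.Nonempty) (hT : T ⊂ S) :
    (Finset.univ.filter fun x : Fin k => ∀ j ∈ S \ T, x ∉ X j).card ≤
      ((Finset.range M).filter fun m => σ m ∈ T).card := by
  classical
  -- pick a user in S \ T
  obtain ⟨i0, hi0S, hi0T⟩ : ∃ i ∈ S, i ∉ T := by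
    obtain ⟨i, hi⟩ := Finset.exists_of_ssubset hT
    exact ⟨i, hi.1, hi.2⟩
  set A : Finset (Fin k) := Finset.univ.filter (fun x => ¬ ∀ j ∈ S \ T, x ∉ X j) with hA
  set D : Finset (Fin k) := Finset.univ.filter (fun x : Fin k => ∀ j ∈ S \ T, x ∉ X j) with hD
  set C : Finset ℕ := (Finset.range M).filter (fun m => σ m ∈ T) with hC
  -- the finite spanning set
  set t : Finset (Fin k → F) :=
    A.image (fun x => Pi.single x (1 : F)) ∪ C.image w with ht
  have hXA : ∀ j ∈ S, j ∉ T → (X j : Set (Fin k)) ⊆ (A : Set (Fin k)) := by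
    intro j hjS hjT x hx
    simp only [hA, Finset.coe_filter, Set.mem_setOf_eq, Finset.mem_univ, true_and]
    push_neg
    exact ⟨j, Finset.mem_sdiff.mpr ⟨hjS, hjT⟩, hx⟩
  have hstd : ∀ j ∈ S, j ∉ T → stdVecs F (X j) ⊆ (t : Set (Fin k → F)) := by
    intro j hjS hjT y hy
    obtain ⟨x, hx, rfl⟩ := hy
    have : x ∈ A := hXA j hjS hjT hx
    simp only [ht, Finset.coe_union, Set.mem_union, Finset.coe_image, Set.mem_image]
    exact Or.inl ⟨x, by simpa using this, rfl⟩
  -- knowledge of i0 is contained in span of t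
  have hsub : know F X i0 (Vset w M) ≤ Submodule.span F (t : Set (Fin k → F)) := by
    apply Submodule.span_le.mpr
    rintro y (hy | hy)
    · exact Submodule.subset_span (hstd i0 hi0S hi0T hy)
    · obtain ⟨m, hm, rfl⟩ := hy
      simp only [Set.mem_setOf_eq] at hm
      by_cases hmT : σ m ∈ T
      · apply Submodule.subset_span
        simp only [ht, Finset.coe_union, Set.mem_union, Finset.coe_image, Set.mem_image]
        exact Or.inr ⟨m, by simp [hC, Finset.mem_filter, Finset.mem_range, hm, hmT], rfl⟩
      · have := hw m hm
        refine Submodule.span_le.mpr ?_ this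
        intro y hy
        exact Submodule.subset_span (hstd (σ m) (hσ m hm) hmT hy)
  -- dimension count
  have hfin : Module.finrank F (Fin k → F) = k := by
    simp [Module.finrank_pi]
  have hk1 : k ≤ Module.finrank F (Submodule.span F (t : Set (Fin k → F))) := by
    have := hScomplete i0 hi0S
    rw [dimKnow] at this
    calc k = Module.finrank F (know F X i0 (Vset w M)) := this.symm
      _ ≤ _ := Submodule.finrank_mono hsub
  have hk2 : Module.finrank F (Submodule.span F (t : Set (Fin k → F))) ≤ t.card :=
    finrank_span_finset_le_card t
  have htcard : t.card ≤ A.card + C.card := by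
    calc t.card ≤ (A.image (fun x => Pi.single x (1 : F))).card + (C.image w).card :=
          Finset.card_union_le _ _
      _ ≤ A.card + C.card :=
          Nat.add_le_add (Finset.card_image_le) (Finset.card_image_le)
  have hAD : D.card + A.card = k := by
    have := Finset.card_filter_add_card_filter_not
      (s := (Finset.univ : Finset (Fin k))) (p := fun x => ∀ j ∈ S \ T, x ∉ X j)
    simpa [hD, hA, Finset.card_univ] using this
  omega
end

section
/- For every greedy transmission sequence v_1,…,v_L and every user i ∈ N, the number of rounds l ∈ {1,…,L} with i ∈ R_l is at most |X̄_i| = k − dim span(U_i). Consequently, the total payment p⁻_i = ∑_{l : i ∈ R_l} 1/|R_l| made by user i under the payment rule of Algorithm 1 satisfies p⁻_i ≤ |X̄_i|. -/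
/-- In a greedy transmission sequence, each user `i` belongs to `R_l` in at most
`|X̄_i| = k − dim span(U_i)` rounds; consequently its total payment
`p⁻_i = ∑_{l : i ∈ R_l} 1/|R_l|` under the payment rule of Algorithm 1 satisfies
`p⁻_i ≤ |X̄_i|`. -/
theorem greedy_user_payment_le_demand
    {F : Type*} [Field F] [Fintype F] (n k : ℕ) (hn : 0 < n) (hk : 0 < k)
    (X : Fin n → Finset (Fin k)) (hcov : ∀ x : Fin k, ∃ i, x ∈ X i)
    (L : ℕ) (v : ℕ → Fin k → F) (t : ℕ → Fin n) (hg : IsGreedy F X L v t)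
    (i : Fin n)
    (hXbar : ((X i)ᶜ : Finset (Fin k)).card
      = k - Module.finrank F (Submodule.span F (stdVecs F (X i)))) :
    ((Finset.range L).filter fun l => i ∈ Rset F X v t l).card
        ≤ ((X i)ᶜ : Finset (Fin k)).card ∧
      ∑ l ∈ (Finset.range L).filter (fun l => i ∈ Rset F X v t l),
          (1 : ℝ) / ((Rset F X v t l).card : ℝ)
        ≤ (((X i)ᶜ : Finset (Fin k)).card : ℝ) := by

  classical
  obtain ⟨hstep, hfin⟩ := hg
  set d : ℕ → ℕ := fun l => dimKnow F X i (Vset v l) with hd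
  have hVmono : ∀ l, Vset v l ⊆ Vset v (l+1) := by
    intro l x hx; obtain ⟨m, hm, rfl⟩ := hx; exact ⟨m, Nat.lt_succ_of_lt hm, rfl⟩
  have hVsucc : ∀ l, Vset v (l+1) = insert (v l) (Vset v l) := by
    intro l; ext x; constructor
    · rintro ⟨m, hm, rfl⟩
      rcases Nat.lt_succ_iff_lt_or_eq.mp hm with h | rfl
      · exact Or.inr ⟨m, h, rfl⟩
      · exact Or.inl rfl
    · rintro (rfl | ⟨m, hm, rfl⟩)
      · exact ⟨l, Nat.lt_succ_self l, rfl⟩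
      · exact ⟨m, Nat.lt_succ_of_lt hm, rfl⟩
  have hmono1 : ∀ l, d l ≤ d (l+1) := fun l =>
    Submodule.finrank_mono (Submodule.span_mono
      (Set.union_subset_union_right _ (hVmono l)))
  have hstrict : ∀ l, l < L → i ∈ Rset F X v t l → d l + 1 ≤ d (l+1) := by
    intro l hl hi
    obtain ⟨_, _, _, hv⟩ := hstep l hl
    have hRsub : stdVecs F (X i) ⊆ ⋃ j ∈ Rset F X v t l, stdVecs F (X j) :=
      fun x hx => Set.mem_biUnion hi hx
    have hle : know F X i (Vset v l) ≤
        Submodule.span F ((⋃ j ∈ Rset F X v t l, stdVecs F (X j)) ∪ Vset v l) :=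
      Submodule.span_mono (Set.union_subset_union_left _ hRsub)
    have hnot : v l ∉ know F X i (Vset v l) := fun h => hv (hle h)
    have hmem : v l ∈ know F X i (Vset v (l+1)) := by
      apply Submodule.subset_span
      rw [hVsucc l]
      exact Or.inr (Set.mem_insert _ _)
    have hlt : know F X i (Vset v l) < know F X i (Vset v (l+1)) := by
      refine lt_of_le_of_ne
        (Submodule.span_mono (Set.union_subset_union_right _ (hVmono l))) ?_
      intro heq
      exact hnot (heq ▸ hmem)
    exact Submodule.finrank_lt_finrank_of_lt hlt
  have hd0 : d 0 = Module.finrank F (Submodule.span F (stdVecs F (X i))) := by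
    have : Vset v 0 = (∅ : Set (Fin k → F)) := by
      ext x; simp [Vset]
    simp only [hd, dimKnow, know]
    rw [show Vset v 0 = (∅ : Set (Fin k → F)) from this]
    exact congrArg (fun s => Module.finrank F (Submodule.span F s)) (Set.union_empty _)
  have hdL : d L = k := hfin i
  set S := (Finset.range L).filter (fun l => i ∈ Rset F X v t l) with hS
  have hcard : S.card ≤ ((X i)ᶜ : Finset (Fin k)).card := by
    have h1 : S.card = ∑ l ∈ S, 1 := by simp
    have h2 : ∑ l ∈ S, 1 ≤ ∑ l ∈ S, (d (l+1) - d l) := by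
      apply Finset.sum_le_sum
      intro l hl
      rw [hS, Finset.mem_filter] at hl
      have := hstrict l (Finset.mem_range.mp hl.1) hl.2
      omega
    have h3 : ∑ l ∈ S, (d (l+1) - d l) ≤ ∑ l ∈ Finset.range L, (d (l+1) - d l) :=
      Finset.sum_le_sum_of_subset (Finset.filter_subset _ _)
    have h4 : ∑ l ∈ Finset.range L, (d (l+1) - d l) = d L - d 0 :=
      Finset.sum_range_tsub (monotone_nat_of_le_succ hmono1) L
    rw [hXbar, ← hd0, ← hdL]
    omega
  refine ⟨hcard, ?_⟩
  have hsum : ∑ l ∈ S, (1 : ℝ) / ((Rset F X v t l).card : ℝ) ≤ ∑ l ∈ S, (1 : ℝ) := by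
    apply Finset.sum_le_sum
    intro l hl
    rw [hS, Finset.mem_filter] at hl
    have hpos : 0 < (Rset F X v t l).card := Finset.card_pos.mpr ⟨i, hl.2⟩
    rw [div_le_one (by exact_mod_cast hpos)]
    exact_mod_cast hpos
  calc ∑ l ∈ S, (1 : ℝ) / ((Rset F X v t l).card : ℝ)
      ≤ ∑ l ∈ S, (1 : ℝ) := hsum
    _ = (S.card : ℝ) := by simp
    _ ≤ (((X i)ᶜ : Finset (Fin k)).card : ℝ) := by exact_mod_cast hcard
end

section
/- Let V ⊆ 𝔽_q^k be any finite set of vectors and suppose some user is incomplete, i.e., min_{i∈N} dim span(U_i ∪ V) < k. Then for any user t attaining max_{i∈N} dim span(U_i ∪ V), there exists a user i ∈ N with U_t ⊄ span(U_i ∪ V). (Hence the set R of users to which the maximum-knowledge transmitter can send an innovative packet is nonempty, so each round of the greedy algorithm is well defined.) -/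
/-- If some user is incomplete given the received vectors `V`, then for any user
`t` of maximum knowledge there is a user `i` with `U_t ⊄ span(U_i ∪ V)`; hence the set `R` of
users to which the maximum-knowledge transmitter can send an innovative packet is nonempty. -/
theorem max_knowledge_transmitter_has_receiver
    {F : Type*} [Field F] [Fintype F] (n k : ℕ) (hn : 0 < n) (hk : 0 < k)
    (X : Fin n → Finset (Fin k)) (hcov : ∀ x : Fin k, ∃ i, x ∈ X i)
    (V : Set (Fin k → F)) (hV : V.Finite)
    (hinc : ∃ i, dimKnow F X i V < k)
    (t : Fin n) (ht : ∀ i, dimKnow F X i V ≤ dimKnow F X t V) :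
    ∃ i : Fin n, ¬ stdVecs F (X t) ⊆ (know F X i V : Set (Fin k → F)) := by
  by_contra h
  push_neg at h
  -- know t ≤ know i for every i
  have hle : ∀ i, know F X t V ≤ know F X i V := by
    intro i
    rw [know, Submodule.span_le]
    apply Set.union_subset (h i)
    exact Set.Subset.trans Set.subset_union_right Submodule.subset_span
  obtain ⟨i0, hi0⟩ := hinc
  have htlt : dimKnow F X t V < k :=
    lt_of_le_of_lt (Submodule.finrank_mono (hle i0)) hi0
  -- each U_i ⊆ know t
  have hUi : ∀ i, Submodule.span F (stdVecs F (X i)) ≤ know F X t V := by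
    intro i
    have hQle : know F X t V ⊔ Submodule.span F (stdVecs F (X i)) ≤ know F X i V := by
      apply sup_le (hle i)
      exact Submodule.span_mono Set.subset_union_left
    have h1 : Module.finrank F (know F X t V ⊔ Submodule.span F (stdVecs F (X i)) :
        Submodule F (Fin k → F)) ≤ dimKnow F X t V :=
      le_trans (Submodule.finrank_mono hQle) (ht i)
    have heq : know F X t V = know F X t V ⊔ Submodule.span F (stdVecs F (X i)) :=
      Submodule.eq_of_le_of_finrank_le le_sup_left h1
    rw [heq]
    exact le_sup_right
  -- hence know t = ⊤
  have htop : know F X t V = ⊤ := by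
    rw [eq_top_iff]
    have : (Submodule.span F (Set.range fun j : Fin k => Pi.single j (1 : F))) ≤
        know F X t V := by
      rw [Submodule.span_le]
      rintro _ ⟨j, rfl⟩
      obtain ⟨i, hij⟩ := hcov j
      exact hUi i (Submodule.subset_span ⟨j, hij, rfl⟩)
    refine le_trans (le_of_eq ?_) this
    have := (Pi.basisFun F (Fin k)).span_eq
    rw [← this]
    congr 1
    ext x
    simp [Pi.basisFun_apply]
  have : dimKnow F X t V = k := by
    rw [dimKnow, htop, finrank_top, Module.finrank_fin_fun]
  omega
end
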